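/- arXiv:2307.05271 — 12 statements merged into one kernel-verified Lean document; each statement's English description precedes it below -/
import Mathlib

section
/- The compact space KA (the closure in the Cantor cube {0,1}^(ℝ²) of the set of characteristic functions of open unit disks with rational centers) is not an LΣ(≤ω)-space; that is, there do not exist a separable metrizable space M and a compact-valued upper semicontinuous onto set-valued map p from M to KA such that p(z) is metrizable for every z ∈ M. -/
open TopologicalSpace

/-- A topological space `X` is an `LΣ(≤ω)`-space if there exist a separable metrizable
space `M` and a compact-valued upper semicontinuous onto set-valued map `p : M → Set X`
all of whose values are metrizable. -/
def IsLSigmaLeOmega (X : Type*) [TopologicalSpace X] : Prop :=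
  ∃ (M : Type) (_ : TopologicalSpace M),
    SeparableSpace M ∧ MetrizableSpace M ∧
    ∃ p : M → Set X,
      (⋃ z, p z) = Set.univ ∧
      (∀ z, IsCompact (p z)) ∧
      (∀ U : Set X, IsOpen U → IsOpen {z | p z ⊆ U}) ∧
      ∀ z, MetrizableSpace (p z)

/-- The open disk of radius `1` centered at `a` in the Euclidean plane. -/
def diskD (a : ℝ × ℝ) : Set (ℝ × ℝ) :=
  {x | (x.1 - a.1) ^ 2 + (x.2 - a.2) ^ 2 < 1}

/-- The characteristic function of a subset of the plane, with values in the
two-point discrete space `Bool`; this is a point of the Cantor cube `{0,1}^(ℝ²)`. -/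
noncomputable def chi (A : Set (ℝ × ℝ)) : (ℝ × ℝ) → Bool :=
  A.boolIndicator

/-- `Y` : the set of characteristic functions of open unit disks with rational centers,
viewed inside the Cantor cube `{0,1}^(ℝ²)` (with the product topology). -/
def YA : Set ((ℝ × ℝ) → Bool) :=
  {f | ∃ p : ℚ × ℚ, f = chi (diskD ((p.1 : ℝ), (p.2 : ℝ)))}

/-- `KA` : the closure of `Y` in the Cantor cube `{0,1}^(ℝ²)`. -/
def KA : Set ((ℝ × ℝ) → Bool) :=
  closure YA

/-!
Suppose `p : M → Set KA` is a witness. For `a ∈ ℝ²` and a unit vector `w`, the limits of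
indicators of unit disks whose centres approach `a` from direction `w` are the indicator of `D(a)`
together with the open half of its boundary circle facing `w`, modified at most at the two
endpoints of that half circle. Each `p z` is compact metrizable, hence second countable, so at a
given `a` it contains such limits for only countably many directions. Choose `z a` such that
`p (z a)` contains such a limit for a fixed direction, and a direction `w a` for which it contains
none. Upper semicontinuity and a countable base of `M` give a basic `B ∋ z a` such that the
centres `b` with `z b ∈ B` cannot accumulate at `a` from direction `w a`. So `ℝ²` is a countable
union of sets each point of which sees a small cone free of its set; such sets are nowhere dense,
contradicting the Baire category theorem.
-/

open Filter Topology Set Metric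
open scoped Real

theorem countable_of_separated {ι X K : Type*} [TopologicalSpace X] [SecondCountableTopology X]
    [Countable K] (x : ι → X) (U : ι → Set X) (κ : ι → K) (hU : ∀ i, IsOpen (U i))
    (hxU : ∀ i, x i ∈ U i) (hsep : ∀ i j, x i ∈ U j → x j ∈ U i → κ i = κ j → i = j) :
    Countable ι := by
  have := (countable_countableBasis X).to_subtype
  choose B hB hxB hBU using fun i =>
    (isBasis_countableBasis X).exists_subset_of_mem_open (hxU i) (hU i)
  refine Function.Injective.countable (f := fun i => ((⟨B i, hB i⟩ : countableBasis X), κ i)) ?_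
  intro i j hij
  simp only [Prod.mk.injEq, Subtype.mk.injEq] at hij
  exact hsep i j (hBU j (hij.1 ▸ hxB i)) (hBU i (hij.1.symm ▸ hxB j)) hij.2

theorem exists_mem_basis_disjoint_closure_biUnion {M X : Type*} [TopologicalSpace M]
    [TopologicalSpace X] [NormalSpace X] {p : M → Set X}
    (husc : ∀ U, IsOpen U → IsOpen {z | p z ⊆ U}) {b : Set (Set M)} (hb : IsTopologicalBasis b)
    {z : M} (hz : IsClosed (p z)) {K : Set X} (hK : IsClosed K) (hzK : Disjoint (p z) K) :
    ∃ B ∈ b, z ∈ B ∧ Disjoint (closure (⋃ z' ∈ B, p z')) K := by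
  obtain ⟨V, hV, hzV, hVK⟩ :=
    normal_exists_closure_subset hz hK.isOpen_compl hzK.subset_compl_right
  obtain ⟨B, hB, hzB, hBV⟩ := hb.exists_subset_of_mem_open (a := z) hzV (husc V hV)
  refine ⟨B, hB, hzB, subset_compl_iff_disjoint_right.mp ((closure_mono ?_).trans hVK)⟩
  exact iUnion₂_subset fun z' hz' => hBV hz'

section Cone

variable {E : Type*} [NormedAddCommGroup E] [NormedSpace ℝ E]

theorem Dense.frequently_add_smul_mem {S : Set E} (hS : Dense S) (a w : E) :
    ∃ᶠ p : ℝ × E in 𝓝[>] 0 ×ˢ 𝓝 w, a + p.1 • p.2 ∈ S := by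
  rw [frequently_iff]
  intro U hU
  obtain ⟨T, hT, T', hT', hTU⟩ := mem_prod_iff.mp hU
  obtain ⟨t, htT, ht⟩ := Filter.nonempty_of_mem (inter_mem hT self_mem_nhdsWithin)
  have hdense : Dense ((fun u => a + t • u) ⁻¹' S) :=
    hS.preimage ((Homeomorph.smulOfNeZero t (ne_of_gt ht)).trans (Homeomorph.addLeft a)).isOpenMap
  obtain ⟨u, huT', huS⟩ := mem_closure_iff_nhds.mp (hdense w) T' hT'
  exact ⟨(t, u), hTU ⟨htT, huT'⟩, huS⟩

theorem isNowhereDense_of_forall_add_smul_notMem {S : Set E} {c : E} {ε : ℝ} (hε : 0 < ε)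
    (hS : ∀ a ∈ S, ∀ t ∈ Ioo 0 ε, ∀ u ∈ ball c ε, a + t • u ∉ S) : IsNowhereDense S := by
  rw [IsNowhereDense, eq_empty_iff_forall_notMem]
  intro y hy
  obtain ⟨r, hr, hball⟩ := Metric.isOpen_iff.mp isOpen_interior y hy
  set ρ := min (ε / 2) (r / (2 * (‖c‖ + 1)))
  have hρ : 0 < ρ := by positivity
  have hρε : ρ < ε := (min_le_left _ _).trans_lt (half_lt_self hε)
  have hρc : ρ * ‖c‖ < r := by
    have : ρ * (2 * (‖c‖ + 1)) ≤ r := (le_div_iff₀ (by positivity)).mp (min_le_right _ _)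
    nlinarith [norm_nonneg c]
  have hy' : y + ρ • c ∈ closure S := by
    refine interior_subset (hball ?_)
    rwa [mem_ball, dist_eq_norm, add_sub_cancel_left, norm_smul, Real.norm_of_nonneg hρ.le]
  obtain ⟨b, hbS, hb⟩ := Metric.mem_closure_iff.mp (interior_subset hy) (ρ * ε / 2) (by positivity)
  obtain ⟨b', hb'S, hb'⟩ := Metric.mem_closure_iff.mp hy' (ρ * ε / 2) (by positivity)
  refine hS b hbS ρ ⟨hρ, hρε⟩ (ρ⁻¹ • (b' - b)) ?_ ?_
  · have hsplit : ρ⁻¹ • (b' - b) - c = ρ⁻¹ • ((y - b) - (y + ρ • c - b')) := by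
      rw [show (y - b) - (y + ρ • c - b') = (b' - b) - ρ • c by abel,
        smul_sub ρ⁻¹ (b' - b) (ρ • c), smul_smul,
        inv_mul_cancel₀ hρ.ne', one_smul]
    rw [mem_ball, dist_eq_norm, hsplit, norm_smul, Real.norm_of_nonneg (inv_nonneg.mpr hρ.le),
      inv_mul_lt_iff₀ hρ]
    rw [dist_eq_norm] at hb hb'
    calc ‖(y - b) - (y + ρ • c - b')‖ ≤ ‖y - b‖ + ‖y + ρ • c - b'‖ := norm_sub_le _ _
      _ < ρ * ε / 2 + ρ * ε / 2 := add_lt_add hb hb'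
      _ = ρ * ε := by ring
  · rwa [smul_smul, mul_inv_cancel₀ hρ.ne', one_smul, add_sub_cancel]

theorem exists_forall_frequently_add_smul_mem [CompleteSpace E] [SeparableSpace E] {ι : Type*}
    [Countable ι] (A : ι → Set E) :
    ∃ a, ∀ i, a ∈ A i → ∀ w, ∃ᶠ p : ℝ × E in 𝓝[>] 0 ×ˢ 𝓝 w, a + p.1 • p.2 ∈ A i := by
  obtain ⟨D, hDc, hD⟩ := exists_countable_dense E
  have := hDc.to_subtype
  set S : ι × ℕ × D → Set E := fun j => {a ∈ A j.1 | ∀ t ∈ Ioo 0 (1 / (j.2.1 + 1 : ℝ)),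
    ∀ u ∈ ball (j.2.2 : E) (1 / (j.2.1 + 1)), a + t • u ∉ A j.1}
  have hS : ∀ j, IsNowhereDense (S j) := fun j =>
    isNowhereDense_of_forall_add_smul_notMem (by positivity) fun a ha t ht u hu hau =>
      ha.2 t ht u hu hau.1
  by_contra! h
  refine not_isMeagre_of_isOpen isOpen_univ univ_nonempty
    ((isMeagre_iUnion fun j => (hS j).isMeagre).mono fun a _ => ?_)
  obtain ⟨i, hai, w, hw⟩ := h a
  obtain ⟨⟨δ, δ'⟩, ⟨hδ, hδ'⟩, hsub⟩ :=
    ((nhdsGT_basis (0 : ℝ)).prod nhds_basis_ball).eventually_iff.mp hw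
  obtain ⟨k, hk⟩ := exists_nat_one_div_lt (half_pos (lt_min hδ hδ'))
  obtain ⟨c, hc, hcw⟩ := hD.exists_dist_lt w (half_pos (lt_min hδ hδ'))
  refine mem_iUnion.mpr ⟨(i, k, ⟨c, hc⟩), hai, fun t ht u hu => hsub (mk_mem_prod ?_ ?_)⟩
  · exact ⟨ht.1, ht.2.trans (by linarith [min_le_left δ δ'])⟩
  · rw [mem_ball] at hu ⊢
    linarith [dist_triangle u c w, dist_comm w c, min_le_right δ δ']

end Cone

namespace Plane

noncomputable section

def nsq (v : ℝ × ℝ) : ℝ := v.1 ^ 2 + v.2 ^ 2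

def dotp (u v : ℝ × ℝ) : ℝ := u.1 * v.1 + u.2 * v.2

def perp (w : ℝ × ℝ) : ℝ × ℝ := (-w.2, w.1)

def dir (θ : ℝ) : ℝ × ℝ := (Real.cos θ, Real.sin θ)

def diskWithArc (a w : ℝ × ℝ) : Set (ℝ × ℝ) :=
  {x | nsq (x - a) < 1 ∨ nsq (x - a) = 1 ∧ 0 < dotp (x - a) w}

/-- The possible limits of indicators of unit disks whose centres approach `a` from direction `w`
(see `exists_mem_diskArcFamily_of_frequently`); their values at the endpoints `a ± perp w` of the
arc are not determined. -/
def diskArcFamily (a w : ℝ × ℝ) : Set (ℝ × ℝ → Bool) :=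
  {g | ∀ x, x ≠ a + perp w → x ≠ a - perp w → g x = chi (diskWithArc a w) x}

lemma nsq_perp (w : ℝ × ℝ) : nsq (perp w) = nsq w := by
  simp only [nsq, perp]; ring

lemma nsq_neg (v : ℝ × ℝ) : nsq (-v) = nsq v := by
  simp [nsq]

lemma dotp_perp_self (w : ℝ × ℝ) : dotp (perp w) w = 0 := by
  simp only [dotp, perp]; ring

lemma dotp_neg_left (v w : ℝ × ℝ) : dotp (-v) w = -dotp v w := by
  simp only [dotp, Prod.fst_neg, Prod.snd_neg]; ring

lemma nsq_dir (θ : ℝ) : nsq (dir θ) = 1 := by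
  simp [nsq, dir]

lemma dotp_perp_dir (θ φ : ℝ) : dotp (perp (dir θ)) (dir φ) = Real.sin (φ - θ) := by
  simp only [dotp, perp, dir, Real.sin_sub]; ring

lemma eq_perp_or_eq_neg_perp_of_dotp_eq_zero {v w : ℝ × ℝ} (hv : nsq v = 1) (hw : nsq w = 1)
    (h : dotp v w = 0) : v = perp w ∨ v = -perp w := by
  simp only [nsq, dotp, perp] at *
  obtain ⟨k, hk⟩ : ∃ k, v.2 * w.1 - v.1 * w.2 = k := ⟨_, rfl⟩
  have h₁ : v.1 = -k * w.2 := by linear_combination (-v.1) * hw + w.1 * h - w.2 * hk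
  have h₂ : v.2 = k * w.1 := by linear_combination (-v.2) * hw + w.2 * h + w.1 * hk
  have hk2 : (k - 1) * (k + 1) = 0 := by
    linear_combination hv - k ^ 2 * hw - (v.1 - k * w.2) * h₁ - (v.2 + k * w.1) * h₂
  rcases mul_eq_zero.mp hk2 with hk | hk
  · obtain rfl : k = 1 := by linarith
    left; ext <;> simp [h₁, h₂]
  · obtain rfl : k = -1 := by linarith
    right; ext <;> simp [h₁, h₂]

lemma chi_eq_true {A : Set (ℝ × ℝ)} {x : ℝ × ℝ} : chi A x = true ↔ x ∈ A :=
  (A.mem_iff_boolIndicator x).symm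

lemma isClosed_diskArcFamily (a w : ℝ × ℝ) : IsClosed (diskArcFamily a w) := by
  simp only [diskArcFamily, ofPred_forall]
  exact isClosed_iInter fun x => isClosed_iInter fun _ => isClosed_iInter fun _ =>
    isClosed_eq (continuous_apply x) continuous_const

lemma apply_add_of_mem_diskArcFamily {g : ℝ × ℝ → Bool} {a v w : ℝ × ℝ}
    (hg : g ∈ diskArcFamily a w) (hv : nsq v = 1) (hvw : dotp v w ≠ 0) :
    g (a + v) = decide (0 < dotp v w) := by
  have h₁ : a + v ≠ a + perp w := fun h => hvw (by rw [add_left_cancel h, dotp_perp_self])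
  have h₂ : a + v ≠ a - perp w := fun h => hvw (by
    rw [sub_eq_add_neg] at h; rw [add_left_cancel h, dotp_neg_left, dotp_perp_self, neg_zero])
  rw [hg _ h₁ h₂, Bool.eq_iff_iff, chi_eq_true, decide_eq_true_iff]
  simp [diskWithArc, hv]

lemma apply_eq_true_iff_of_mem_diskArcFamily {g : ℝ × ℝ → Bool} {a w x : ℝ × ℝ}
    (hg : g ∈ diskArcFamily a w) (hw : nsq w = 1) (hx : nsq (x - a) ≠ 1) :
    g x = true ↔ nsq (x - a) < 1 := by
  have h₁ : x ≠ a + perp w := by rintro rfl; simp [nsq_perp, hw] at hx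
  have h₂ : x ≠ a - perp w := by rintro rfl; simp [nsq_neg, nsq_perp, hw] at hx
  rw [hg x h₁ h₂, chi_eq_true]
  simp [diskWithArc, hx]

lemma eventually_nsq_sub_ne_one_and_lt_one_iff {a w x : ℝ × ℝ} (hw : nsq w = 1)
    (hx₁ : x ≠ a + perp w) (hx₂ : x ≠ a - perp w) :
    ∀ᶠ p : ℝ × (ℝ × ℝ) in 𝓝[>] 0 ×ˢ 𝓝 w, nsq (x - (a + p.1 • p.2)) ≠ 1 ∧
      (nsq (x - (a + p.1 • p.2)) < 1 ↔ x ∈ diskWithArc a w) := by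
  set v := x - a
  set s : ℝ × (ℝ × ℝ) → ℝ := fun p => 2 * dotp v p.2 - p.1 * nsq p.2
  have hexp : ∀ p : ℝ × (ℝ × ℝ), nsq (x - (a + p.1 • p.2)) = nsq v - p.1 * s p := by
    intro p
    simp only [s, v, nsq, dotp, Prod.fst_sub, Prod.snd_sub, Prod.fst_add, Prod.snd_add,
      Prod.smul_fst, Prod.smul_snd, smul_eq_mul]
    ring
  have hle : 𝓝[>] (0 : ℝ) ×ˢ 𝓝 w ≤ 𝓝 (0, w) := by
    rw [nhds_prod_eq (x := (0 : ℝ)) (y := w)]; exact Filter.prod_mono nhdsWithin_le_nhds le_rfl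
  have hs : Tendsto s (𝓝[>] 0 ×ˢ 𝓝 w) (𝓝 (2 * dotp v w)) := by
    refine (Continuous.tendsto' ?_ (0, w) _ (by simp [s])).mono_left hle
    simp only [s, dotp, nsq]; fun_prop
  have hnsq : Tendsto (fun p : ℝ × (ℝ × ℝ) => nsq v - p.1 * s p) (𝓝[>] 0 ×ˢ 𝓝 w)
      (𝓝 (nsq v)) := by
    simpa using
      tendsto_const_nhds.sub (((continuous_fst.tendsto' (0, w) 0 rfl).mono_left hle).mul hs)
  have hpos : ∀ᶠ p : ℝ × (ℝ × ℝ) in 𝓝[>] 0 ×ˢ 𝓝 w, 0 < p.1 :=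
    (eventually_mem_nhdsWithin (s := Ioi (0 : ℝ)) (a := 0)).prod_inl _
  simp only [hexp]
  rcases lt_trichotomy (nsq v) 1 with hv | hv | hv
  · filter_upwards [hnsq.eventually (gt_mem_nhds hv)] with p hp
    exact ⟨hp.ne, iff_of_true hp (Or.inl hv)⟩
  · -- On the unit circle the sign of the first-order term `-2 t ⟨v, u⟩` decides, and
    -- `⟨v, w⟩ ≠ 0` away from the endpoints of the arc.
    have hvw : dotp v w ≠ 0 := fun h0 =>
      (eq_perp_or_eq_neg_perp_of_dotp_eq_zero hv hw h0).elim
        (fun h' => hx₁ (eq_add_of_sub_eq' h'))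
        (fun h' => hx₂ (by rw [eq_add_of_sub_eq' h', ← sub_eq_add_neg]))
    rcases hvw.lt_or_gt with hvw | hvw
    · filter_upwards [hpos, hs.eventually (gt_mem_nhds (by linarith : 2 * dotp v w < 0))]
        with p hp1 hp2
      have : 1 < nsq v - p.1 * s p := by rw [hv]; nlinarith
      exact ⟨this.ne', iff_of_false this.not_gt (by rintro (h' | ⟨-, h'⟩) <;> linarith)⟩
    · filter_upwards [hpos, hs.eventually (lt_mem_nhds (by linarith : 0 < 2 * dotp v w))]
        with p hp1 hp2
      have : nsq v - p.1 * s p < 1 := by rw [hv]; nlinarith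
      exact ⟨this.ne, iff_of_true this (Or.inr ⟨hv, hvw⟩)⟩
  · filter_upwards [hnsq.eventually (lt_mem_nhds hv)] with p hp
    exact ⟨hp.ne', iff_of_false hp.not_gt (by rintro (h' | ⟨h', -⟩) <;> linarith)⟩

theorem exists_mem_diskArcFamily_of_frequently {F : Set (ℝ × ℝ → Bool)} (hF : IsClosed F)
    {S : Set (ℝ × ℝ)} {y : ℝ × ℝ → ℝ × ℝ → Bool} (hyF : ∀ b ∈ S, y b ∈ F)
    (hy : ∀ b x, nsq (x - b) ≠ 1 → (y b x = true ↔ nsq (x - b) < 1)) {a w : ℝ × ℝ}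
    (hw : nsq w = 1) (hS : ∃ᶠ p : ℝ × (ℝ × ℝ) in 𝓝[>] 0 ×ˢ 𝓝 w, a + p.1 • p.2 ∈ S) :
    ∃ g ∈ F, g ∈ diskArcFamily a w := by
  set l := 𝓝[>] (0 : ℝ) ×ˢ 𝓝 w ⊓ 𝓟 {p | a + p.1 • p.2 ∈ S}
  have : l.NeBot := frequently_iff_neBot.mp hS
  obtain ⟨g, hgF, hg⟩ := hF.isCompact.exists_clusterPt
    (f := map (fun p => y (a + p.1 • p.2)) l)
    (le_principal_iff.mpr (mem_map.mpr (mem_inf_of_right fun p hp => hyF _ hp)))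
  refine ⟨g, hgF, fun x hx₁ hx₂ => ?_⟩
  have hev : {g' : ℝ × ℝ → Bool | g' x = chi (diskWithArc a w) x} ∈
      map (fun p => y (a + p.1 • p.2)) l := by
    refine mem_inf_of_left
      ((eventually_nsq_sub_ne_one_and_lt_one_iff hw hx₁ hx₂).mono fun p hp => ?_)
    rw [mem_ofPred_eq, Bool.eq_iff_iff, hy _ _ hp.1, hp.2, chi_eq_true]
  exact (isClosed_eq (continuous_apply x) continuous_const).closure_subset
    (hg.mem_closure_of_mem _ hev)

theorem exists_mem_KA_mem_diskArcFamily (a : ℝ × ℝ) {w : ℝ × ℝ} (hw : nsq w = 1) :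
    ∃ g ∈ KA, g ∈ diskArcFamily a w :=
  exists_mem_diskArcFamily_of_frequently isClosed_closure
    (S := range (Prod.map ((↑) : ℚ → ℝ) ((↑) : ℚ → ℝ))) (y := fun b => chi (diskD b))
    (by rintro _ ⟨q, rfl⟩; exact subset_closure ⟨q, rfl⟩) (fun _ _ _ => chi_eq_true) hw
    (Dense.frequently_add_smul_mem
      ((Rat.denseRange_cast (𝕜 := ℝ)).prodMap (Rat.denseRange_cast (𝕜 := ℝ))) a w)

theorem exists_forall_notMem_diskArcFamily {X : Type*} [TopologicalSpace X]
    [SecondCountableTopology X] {f : X → ℝ × ℝ → Bool} (hf : Continuous f) (a : ℝ × ℝ) :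
    ∃ w, nsq w = 1 ∧ ∀ x, f x ∉ diskArcFamily a w := by
  set T := {θ ∈ Ioo 0 π | ∃ x, f x ∈ diskArcFamily a (dir θ)}
  suffices hT : T.Countable by
    have hIoo : ¬(Ioo 0 π).Countable := by simp [Real.pi_pos]
    obtain ⟨θ, hθ, hθT⟩ : (Ioo 0 π \ T).Nonempty :=
      nonempty_iff_ne_empty.mpr fun h => hIoo (hT.mono (sdiff_eq_empty.mp h))
    exact ⟨dir θ, nsq_dir θ, fun x hx => hθT ⟨hθ, x, hx⟩⟩
  choose x hx using fun θ : T => θ.2.2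
  set P := fun θ : T => perp (dir θ)
  rw [← countable_coe_iff]
  refine countable_of_separated x (fun θ => (fun x' => f x' (a + P θ)) ⁻¹' {f (x θ) (a + P θ)})
    (fun θ => f (x θ) (a + P θ))
    (fun θ => (isOpen_discrete _).preimage ((continuous_apply _).comp hf))
    (fun θ => rfl) fun θ φ hθφ hφθ hκ => ?_
  -- The `φ`-point takes the value `0 < sin (φ - θ)` at `a + P θ`, the `θ`-point the value
  -- `0 < sin (θ - φ)` at `a + P φ`; the hypotheses force these two values to agree.
  rw [mem_preimage, mem_singleton_iff] at hθφ hφθ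
  by_contra hne
  have hs : Real.sin (φ - θ) ≠ 0 := by
    rw [Ne, Real.sin_eq_zero_iff_of_lt_of_lt (by linarith [θ.2.1.2, φ.2.1.1])
      (by linarith [θ.2.1.1, φ.2.1.2]), sub_eq_zero]
    exact fun h => hne (Subtype.ext h.symm)
  have h₁ := apply_add_of_mem_diskArcFamily (hx φ) (v := P θ) (by simp [P, nsq_perp, nsq_dir])
    (by rwa [dotp_perp_dir])
  have h₂ := apply_add_of_mem_diskArcFamily (hx θ) (v := P φ) (by simp [P, nsq_perp, nsq_dir])
    (by rwa [dotp_perp_dir, ← neg_sub (φ : ℝ), Real.sin_neg, neg_ne_zero])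
  have hsign := h₁.symm.trans (hφθ.trans (hκ.trans (hθφ.symm.trans h₂)))
  rw [dotp_perp_dir, dotp_perp_dir, ← neg_sub (φ : ℝ), Real.sin_neg, decide_eq_decide] at hsign
  rcases hs.lt_or_gt with h | h
  · linarith [hsign.mpr (neg_pos.mpr h)]
  · linarith [hsign.mp h]

end

end Plane

open Plane in
/-- The compact space `KA` is not an `LΣ(≤ω)`-space. -/
theorem KA_not_LSigmaLeOmega : ¬ IsLSigmaLeOmega ↥KA := by
  rintro ⟨M, _, _, _, p, hcov, hcpt, husc, hmet⟩
  have : SecondCountableTopology M := by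
    let := metrizableSpaceMetric M
    infer_instance
  obtain ⟨𝓑, h𝓑c, -, h𝓑⟩ := exists_countable_basis M
  have := h𝓑c.to_subtype
  have : CompactSpace KA := isCompact_iff_compactSpace.mp isClosed_closure.isCompact
  choose y hyKA hy using fun a => exists_mem_KA_mem_diskArcFamily a (w := (1, 0)) (by simp [nsq])
  choose ζ hζ using fun a => mem_iUnion.mp (hcov.ge (mem_univ (⟨y a, hyKA a⟩ : KA)))
  obtain ⟨a, ha⟩ := exists_forall_frequently_add_smul_mem fun B : 𝓑 => ζ ⁻¹' B
  obtain ⟨w, hw, hwa⟩ : ∃ w, nsq w = 1 ∧ ∀ g : p (ζ a), g.1.1 ∉ diskArcFamily a w := by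
    have := hmet (ζ a)
    have := isCompact_iff_compactSpace.mp (hcpt (ζ a))
    exact exists_forall_notMem_diskArcFamily (by fun_prop) a
  obtain ⟨B, hB, haB, hdisj⟩ := exists_mem_basis_disjoint_closure_biUnion husc h𝓑
    (hcpt (ζ a)).isClosed ((isClosed_diskArcFamily a w).preimage continuous_subtype_val)
    (disjoint_left.mpr fun g hg => hwa ⟨g, hg⟩)
  obtain ⟨_, ⟨g, hg, rfl⟩, hgw⟩ := exists_mem_diskArcFamily_of_frequently
    (F := Subtype.val '' closure (⋃ z ∈ B, p z))
    ((isClosed_closure : IsClosed KA).isClosedMap_subtype_val _ isClosed_closure)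
    (S := ζ ⁻¹' B) (fun b hb => ⟨_, subset_closure (mem_biUnion hb (hζ b)), rfl⟩)
    (fun b _ hx => apply_eq_true_iff_of_mem_diskArcFamily (hy b) (by simp [nsq]) hx) hw
    (ha ⟨B, hB⟩ haB w)
  exact disjoint_left.mp hdisj hg hgw
end

section
/- Let Γ be a set and let K be a compact Hausdorff subspace of Σ(ℝ^Γ) of cardinality at most the continuum. If K has property 𝓔₂(ℵ₁), then K is an LΣ(≤ω)-space. -/
open TopologicalSpace

/-- A rational open interval around a real `r` avoiding a finite set not containing `r`. -/
lemma exists_rat_avoid (F : Set ℝ) (hF : F.Finite) (r : ℝ) (hr : r ∉ F) :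
    ∃ a b : ℚ, (a : ℝ) < r ∧ r < (b : ℝ) ∧
      ∀ y ∈ F, ¬((a : ℝ) < y ∧ y < (b : ℝ)) := by
  classical
  have hδ : ∃ δ : ℝ, 0 < δ ∧ ∀ y ∈ F, δ ≤ |y - r| := by
    rcases hF.toFinset.eq_empty_or_nonempty with he | hne
    · refine ⟨1, one_pos, fun y hy => ?_⟩
      exact absurd (hF.mem_toFinset.mpr hy) (by simp [he])
    · obtain ⟨y₀, hy₀, hmin⟩ := Finset.exists_min_image hF.toFinset (fun y => |y - r|) hne
      refine ⟨|y₀ - r|, ?_, fun y hy => hmin y (hF.mem_toFinset.mpr hy)⟩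
      have : y₀ ≠ r := fun h => hr (h ▸ hF.mem_toFinset.mp hy₀)
      have : y₀ - r ≠ 0 := sub_ne_zero.mpr this
      exact abs_pos.mpr this
  obtain ⟨δ, hδpos, hδ⟩ := hδ
  obtain ⟨a, ha1, ha2⟩ := exists_rat_btwn (show r - δ < r by linarith)
  obtain ⟨b, hb1, hb2⟩ := exists_rat_btwn (show r < r + δ by linarith)
  refine ⟨a, b, ha2, hb1, ?_⟩
  rintro y hy ⟨h1, h2⟩
  have h3 := hδ y hy
  have h4 : |y - r| < δ := by
    rw [abs_lt]
    constructor <;> nlinarith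
  linarith

namespace E2Aux

variable {Γ : Type*}

/-- The countable set associated to a point of `K` by the `𝓔₂(ℵ₁)` property, together
with the support of the point. -/
def Dset (Γn : ℕ → Set Γ) (x : Γ → ℝ) : Set Γ :=
  (Set.univ \ ⋃ n ∈ {n : ℕ | ({γ : Γ | x γ ≠ 0} ∩ Γn n).Finite}, Γn n) ∪ {γ : Γ | x γ ≠ 0}

/-- The compact metrizable "value" associated to `x`: all points of `K` supported in
`Dset Γn x`. -/
def Cset (K : Set (Γ → ℝ)) (Γn : ℕ → Set Γ) (x : Γ → ℝ) : Set ↥K :=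
  {z : ↥K | ∀ γ : Γ, γ ∉ Dset Γn x → (z : Γ → ℝ) γ = 0}

/-- The countable family of closed subsets of `K` used as a network modulo the cover by
the sets `Cset`. -/
def Nset (K : Set (Γ → ℝ)) (Γn : ℕ → Set Γ) (Γ₀ : Set Γ) (j : Γ → ℝ)
    (i : ℕ × ℚ × ℚ) : Set ↥K :=
  {z : ↥K | ∀ γ : Γ, γ ∈ Γn i.1 → γ ∈ Γ₀ → (i.2.1 : ℝ) < j γ → j γ < (i.2.2 : ℝ) →
    (z : Γ → ℝ) γ = 0}

end E2Aux

open E2Aux in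
/-- If `K` is a compact subspace of the `Σ`-product `Σ(ℝ^Γ)` (i.e. every `x ∈ K` has
countable support) of cardinality at most the continuum which has the property
`𝓔₂(ℵ₁)` — witnessed by a sequence `(Γ_n)` of subsets of `Γ` such that for every
`x ∈ K` the set `Γ \ ⋃ {Γ_n : supp x ∩ Γ_n finite}` is countable — then `K` is an
`LΣ(≤ω)`-space.  (`K` carries the topology inherited from the product `ℝ^Γ`; it is
automatically Hausdorff.) -/
theorem E2_of_card_le_continuum_isLSigmaLeOmega {Γ : Type*} (K : Set (Γ → ℝ))
    (hK : IsCompact K)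
    (hSigma : ∀ x ∈ K, {γ : Γ | x γ ≠ 0}.Countable)
    (hcard : Cardinal.mk ↥K ≤ Cardinal.continuum)
    (hE2 : ∃ Γn : ℕ → Set Γ, ∀ x ∈ K,
      (Set.univ \ ⋃ n ∈ {n : ℕ | ({γ : Γ | x γ ≠ 0} ∩ Γn n).Finite}, Γn n).Countable) :
    IsLSigmaLeOmega ↥K := by
  classical
  obtain ⟨Γn, hΓn⟩ := hE2
  haveI : CompactSpace ↥K := isCompact_iff_compactSpace.mp hK
  -- the total support of `K`
  set Γ₀ : Set Γ := ⋃ x : ↥K, {γ : Γ | (x : Γ → ℝ) γ ≠ 0} with hΓ₀def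
  have hsupp : ∀ x : ↥K, ∀ γ : Γ, (x : Γ → ℝ) γ ≠ 0 → γ ∈ Γ₀ := by
    intro x γ h
    rw [hΓ₀def]
    exact Set.mem_iUnion.mpr ⟨x, h⟩
  -- an injection of the total support into the reals
  obtain ⟨j₀⟩ : Nonempty (↥Γ₀ ↪ ℝ) := by
    rw [← Cardinal.lift_mk_le', Cardinal.mk_real, Cardinal.lift_continuum,
      Cardinal.lift_uzero]
    calc Cardinal.mk ↥Γ₀
        ≤ Cardinal.mk ↥K * ⨆ x : ↥K, Cardinal.mk ↥{γ : Γ | (x : Γ → ℝ) γ ≠ 0} :=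
          Cardinal.mk_iUnion_le _
      _ ≤ Cardinal.continuum * Cardinal.aleph0 := by
          refine mul_le_mul' hcard (ciSup_le' fun x => ?_)
          haveI := (hSigma x x.2).to_subtype
          exact Cardinal.mk_le_aleph0
      _ ≤ Cardinal.continuum * Cardinal.continuum :=
          mul_le_mul' le_rfl Cardinal.aleph0_le_continuum
      _ = Cardinal.continuum := Cardinal.continuum_mul_self
  set j : Γ → ℝ := fun γ => if h : γ ∈ Γ₀ then j₀ ⟨γ, h⟩ else 0 with hjdef
  have hj : ∀ ⦃γ γ' : Γ⦄, γ ∈ Γ₀ → γ' ∈ Γ₀ → j γ = j γ' → γ = γ' := by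
    intro γ γ' h h' e
    rw [hjdef] at e
    simp only [dif_pos h, dif_pos h'] at e
    exact Subtype.mk_eq_mk.mp (j₀.injective e)
  -- basic properties of the sets `Dset` and `Cset`
  have hDc : ∀ x : ↥K, (Dset Γn (x : Γ → ℝ)).Countable := by
    intro x
    exact (hΓn x x.2).union (hSigma x x.2)
  have hxC : ∀ x : ↥K, x ∈ Cset K Γn (x : Γ → ℝ) := by
    intro x γ hγ
    by_contra h
    exact hγ (Set.mem_union_right _ h)
  have hCclosed : ∀ x : ↥K, IsClosed (Cset K Γn (x : Γ → ℝ)) := by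
    intro x
    have : Cset K Γn (x : Γ → ℝ) =
        ⋂ γ ∈ {γ : Γ | γ ∉ Dset Γn (x : Γ → ℝ)}, {z : ↥K | (z : Γ → ℝ) γ = 0} := by
      ext z
      simp only [Cset, Set.mem_setOf_eq, Set.mem_iInter]
    rw [this]
    exact isClosed_biInter fun γ _ =>
      isClosed_eq ((continuous_apply γ).comp continuous_subtype_val) continuous_const
  have hCcompact : ∀ x : ↥K, IsCompact (Cset K Γn (x : Γ → ℝ)) := fun x =>
    (hCclosed x).isCompact
  have hCmetr : ∀ x : ↥K, MetrizableSpace ↥(Cset K Γn (x : Γ → ℝ)) := by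
    intro x
    haveI : Countable ↥(Dset Γn (x : Γ → ℝ)) := (hDc x).to_subtype
    haveI : CompactSpace ↥(Cset K Γn (x : Γ → ℝ)) :=
      isCompact_iff_compactSpace.mp (hCcompact x)
    set φ : ↥(Cset K Γn (x : Γ → ℝ)) → (↥(Dset Γn (x : Γ → ℝ)) → ℝ) :=
      fun z δ => ((z : ↥K) : Γ → ℝ) δ with hφdef
    have hcont : Continuous φ :=
      continuous_pi fun δ => (continuous_apply (δ : Γ)).comp
        (continuous_subtype_val.comp continuous_subtype_val)
    have hinj : Function.Injective φ := by
      intro z w h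
      apply Subtype.ext
      apply Subtype.ext
      funext γ
      by_cases hγ : γ ∈ Dset Γn (x : Γ → ℝ)
      · have := congrFun h ⟨γ, hγ⟩
        simpa [hφdef] using this
      · rw [z.2 γ hγ, w.2 γ hγ]
    exact (hcont.isClosedEmbedding hinj).toIsEmbedding.metrizableSpace
  -- the sets `Nset` are closed
  have hNclosed : ∀ i : ℕ × ℚ × ℚ, IsClosed (Nset K Γn Γ₀ j i) := by
    intro i
    have : Nset K Γn Γ₀ j i =
        ⋂ γ ∈ {γ : Γ | γ ∈ Γn i.1 ∧ γ ∈ Γ₀ ∧ (i.2.1 : ℝ) < j γ ∧ j γ < (i.2.2 : ℝ)},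
          {z : ↥K | (z : Γ → ℝ) γ = 0} := by
      ext z
      simp only [Nset, Set.mem_setOf_eq, Set.mem_iInter]
      constructor
      · rintro h γ ⟨h1, h2, h3, h4⟩
        exact h γ h1 h2 h3 h4
      · intro h γ h1 h2 h3 h4
        exact h γ ⟨h1, h2, h3, h4⟩
    rw [this]
    exact isClosed_biInter fun γ _ =>
      isClosed_eq ((continuous_apply γ).comp continuous_subtype_val) continuous_const
  -- key separation property
  have hsep : ∀ x w : ↥K, w ∉ Cset K Γn (x : Γ → ℝ) →
      ∃ i : ℕ × ℚ × ℚ, Cset K Γn (x : Γ → ℝ) ⊆ Nset K Γn Γ₀ j i ∧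
        w ∉ Nset K Γn Γ₀ j i := by
    intro x w hw
    have hw' : ∃ γ : Γ, γ ∉ Dset Γn (x : Γ → ℝ) ∧ (w : Γ → ℝ) γ ≠ 0 := by
      by_contra h
      push_neg at h
      exact hw (fun γ hγ => h γ hγ)
    obtain ⟨γ₀, hγD, hwγ⟩ := hw'
    have hγΓ₀ : γ₀ ∈ Γ₀ := hsupp w γ₀ hwγ
    have hxγ : (x : Γ → ℝ) γ₀ = 0 := by
      by_contra h
      exact hγD (Set.mem_union_right _ h)
    have h1 : γ₀ ∈ ⋃ n ∈ {n : ℕ | ({γ : Γ | (x : Γ → ℝ) γ ≠ 0} ∩ Γn n).Finite}, Γn n := by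
      by_contra h
      exact hγD (Set.mem_union_left _ ⟨Set.mem_univ _, h⟩)
    obtain ⟨n₀, hn₀, hγn⟩ := Set.mem_iUnion₂.mp h1
    have hS : ({γ : Γ | (x : Γ → ℝ) γ ≠ 0} ∩ Γn n₀).Finite := hn₀
    have hjS : (j '' ({γ : Γ | (x : Γ → ℝ) γ ≠ 0} ∩ Γn n₀)).Finite := hS.image j
    have hnot : j γ₀ ∉ j '' ({γ : Γ | (x : Γ → ℝ) γ ≠ 0} ∩ Γn n₀) := by
      rintro ⟨γ, hγS, he⟩
      have hγ0 : γ = γ₀ := hj (hsupp x γ hγS.1) hγΓ₀ he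
      rw [hγ0] at hγS
      exact hγS.1 hxγ
    obtain ⟨a, b, ha, hb, havoid⟩ := exists_rat_avoid _ hjS _ hnot
    refine ⟨(n₀, a, b), ?_, ?_⟩
    · intro z hz γ hγ1 hγ2 hγ3 hγ4
      by_contra hzγ
      have hγD' : γ ∈ Dset Γn (x : Γ → ℝ) := by
        by_contra h
        exact hzγ (hz γ h)
      have hsuppx : (x : Γ → ℝ) γ ≠ 0 := by
        rcases hγD' with h | h
        · exact absurd (Set.mem_iUnion₂.mpr ⟨n₀, hn₀, hγ1⟩) h.2
        · exact h
      exact havoid (j γ) ⟨γ, ⟨hsuppx, hγ1⟩, rfl⟩ ⟨hγ3, hγ4⟩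
    · intro hN
      exact hwγ (hN γ₀ hγn hγΓ₀ ha hb)
  -- the codes
  set cd : ↥K → (ℕ × ℚ × ℚ → ℝ) := fun x i =>
    if Cset K Γn (x : Γ → ℝ) ⊆ Nset K Γn Γ₀ j i then 1 else 0 with hcd
  -- the set-valued map
  set p : ↥(Set.range cd) → Set ↥K :=
    fun g => ⋂ i ∈ {i : ℕ × ℚ × ℚ | g.val i = 1}, Nset K Γn Γ₀ j i with hpdef
  have hcd1 : ∀ (x : ↥K) (i : ℕ × ℚ × ℚ),
      cd x i = 1 ↔ Cset K Γn (x : Γ → ℝ) ⊆ Nset K Γn Γ₀ j i := by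
    intro x i
    rw [hcd]
    by_cases h : Cset K Γn (x : Γ → ℝ) ⊆ Nset K Γn Γ₀ j i
    · simp [h]
    · simp [h]
  have hcd01 : ∀ (x : ↥K) (i : ℕ × ℚ × ℚ), cd x i = 0 ∨ cd x i = 1 := by
    intro x i
    rw [hcd]
    by_cases h : Cset K Γn (x : Γ → ℝ) ⊆ Nset K Γn Γ₀ j i
    · right; simp [h]
    · left; simp [h]
  have hpEq : ∀ (g : ↥(Set.range cd)) (x : ↥K),
      cd x = g.val → p g = Cset K Γn (x : Γ → ℝ) := by
    intro g x hx
    apply Set.Subset.antisymm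
    · intro w hw
      by_contra hwC
      obtain ⟨i, hCN, hwN⟩ := hsep x w hwC
      have h1 : g.val i = 1 := by
        rw [← hx]
        exact (hcd1 x i).mpr hCN
      exact hwN (Set.mem_iInter₂.mp hw i h1)
    · intro w hw
      apply Set.mem_iInter₂.mpr
      intro i hi
      have h1 : cd x i = 1 := by rw [hx]; exact hi
      exact ((hcd1 x i).mp h1) hw
  refine ⟨↥(Set.range cd), inferInstance,
    inferInstance, inferInstance, p, ?_, ?_, ?_, ?_⟩
  · -- onto
    apply Set.eq_univ_of_forall
    intro w
    apply Set.mem_iUnion.mpr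
    refine ⟨⟨cd w, w, rfl⟩, ?_⟩
    rw [hpEq ⟨cd w, w, rfl⟩ w rfl]
    exact hxC w
  · -- compact values
    intro g
    obtain ⟨x, hx⟩ := g.2
    rw [hpEq g x hx]
    exact hCcompact x
  · -- upper semicontinuity
    intro U hU
    rw [isOpen_iff_forall_mem_open]
    intro z hz
    obtain ⟨x, hx⟩ := z.2
    have hpz : p z = Cset K Γn (x : Γ → ℝ) := hpEq z x hx
    have hzU : Cset K Γn (x : Γ → ℝ) ⊆ U := by
      rw [← hpz]; exact hz
    have hUc : IsCompact (Uᶜ : Set ↥K) := hU.isClosed_compl.isCompact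
    have hcover : (Uᶜ : Set ↥K) ⊆
        ⋃ i : {i : ℕ × ℚ × ℚ // z.val i = 1}, (Nset K Γn Γ₀ j i.val)ᶜ := by
      intro w hw
      have hwC : w ∉ Cset K Γn (x : Γ → ℝ) := fun h => hw (hzU h)
      obtain ⟨i, hCN, hwN⟩ := hsep x w hwC
      have h1 : z.val i = 1 := by
        rw [← hx]
        exact (hcd1 x i).mpr hCN
      exact Set.mem_iUnion.mpr ⟨⟨i, h1⟩, hwN⟩
    obtain ⟨t, ht⟩ := hUc.elim_finite_subcover _
      (fun i : {i : ℕ × ℚ × ℚ // z.val i = 1} => (hNclosed i.val).isOpen_compl) hcover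
    refine ⟨{h : ↥(Set.range cd) |
      ∀ i ∈ t, (1 / 2 : ℝ) < h.val i.val}, ?_, ?_, ?_⟩
    · -- this open set is contained in `{z | p z ⊆ U}`
      intro h hh
      intro w hw
      by_contra hwU
      obtain ⟨i, hit, hwN⟩ := Set.mem_iUnion₂.mp (ht hwU)
      obtain ⟨y, hy⟩ := h.2
      have h1 : h.val i.val = 1 := by
        have h2 := hh i hit
        rw [← hy] at h2 ⊢
        rcases hcd01 y i.val with h0 | h0
        · rw [h0] at h2; norm_num at h2
        · exact h0
      exact hwN (Set.mem_iInter₂.mp hw i.val h1)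
    · -- openness
      have : {h : ↥(Set.range cd) |
          ∀ i ∈ t, (1 / 2 : ℝ) < h.val i.val} =
          ⋂ i ∈ t, {h : ↥(Set.range cd) |
            (1 / 2 : ℝ) < h.val i.val} := by
        ext h
        exact ⟨fun hh => Set.mem_iInter₂.mpr hh, fun hh => Set.mem_iInter₂.mp hh⟩
      rw [this]
      refine isOpen_biInter_finset fun i _ => ?_
      exact isOpen_Ioi.preimage ((continuous_apply i.val).comp continuous_subtype_val)
    · -- contains `z`
      intro i hit
      have h1 : z.val i.val = 1 := i.2
      rw [h1]
      norm_num
  · -- metrizable values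
    intro g
    obtain ⟨x, hx⟩ := g.2
    rw [hpEq g x hx]
    exact hCmetr x
end

section
/- For every countable ordinal λ, the space [0,1]^λ_lex (the product [0,1]^λ endowed with the order topology of the lexicographic order) is a KLΣ(≤ω)-space. -/
open TopologicalSpace

/-- A topological space `X` is a `KLΣ(≤ω)`-space if there exist a compact metrizable
space `M` and a compact-valued upper semicontinuous onto set-valued map `p : M → Set X`
all of whose values are metrizable. -/
def IsKLSigmaLeOmega (X : Type*) [TopologicalSpace X] : Prop :=
  ∃ (M : Type) (_ : TopologicalSpace M),
    CompactSpace M ∧ MetrizableSpace M ∧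
    ∃ p : M → Set X,
      (⋃ z, p z) = Set.univ ∧
      (∀ z, IsCompact (p z)) ∧
      (∀ U : Set X, IsOpen U → IsOpen {z | p z ⊆ U}) ∧
      ∀ z, MetrizableSpace (p z)

/-!
Take `M = [0,1]^ℕ`, which maps continuously onto the product space `[0,1]^λ` when `λ` is
countable, and let `p z` be the set of cluster points, in the lexicographic order topology, of
`toLex` along the product neighbourhoods of `z`. Every lexicographic power of a complete linear
order by a well-order is again a complete linear order, hence compact; this makes `p`
compact-valued and upper semicontinuous, and `z ∈ p z`. A cluster point `x > z` first differing
from `z` at `γ` must be constantly `⊤ = 1` from `γ` on: otherwise, for `z γ < c < x γ`, the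
product neighbourhood `{y | y γ < c}` of `z` misses a lexicographic interval around `x`.
Dually below `z` with `⊥ = 0`. So `p z` is countable, and a countable compact Hausdorff space
is metrizable.
-/

open Function Set Filter Topology OrderDual

namespace Pi

variable {ι α : Type*} [LinearOrder ι]

section LinearOrder

variable [LinearOrder α]

theorem toLex_toDual_comp_lt_iff {x y : ι → α} :
    toLex (toDual ∘ x) < toLex (toDual ∘ y) ↔ toLex y < toLex x :=
  ⟨fun ⟨i, hagree, hlt⟩ ↦ ⟨i, fun j hj ↦ (hagree j hj).symm, hlt⟩,
    fun ⟨i, hagree, hlt⟩ ↦ ⟨i, fun j hj ↦ (hagree j hj).symm, hlt⟩⟩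

variable [DecidableEq ι]

theorem toLex_notMem_Ioo_update_update_of_lt {x y : ι → α} {γ δ : ι} {c m : α} (hγδ : γ ≤ δ)
    (hy : y γ < c) :
    toLex y ∉ Ioo (toLex (update x γ c)) (toLex (update x δ m)) := by
  rintro ⟨⟨i, hagree, hlt⟩, hy_lt⟩
  rcases lt_trichotomy i γ with hiγ | rfl | hγi
  · -- `y` already leaves `x` at `i < γ ≤ δ`, where both endpoints still agree with `x`.
    have hx_eq : ∀ j ≤ i, update x δ m j = update x γ c j := fun j hj ↦ by
      rw [update_of_ne (hj.trans_lt (hiγ.trans_le hγδ)).ne,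
        update_of_ne (hj.trans_lt hiγ).ne]
    refine hy_lt.not_gt ⟨i, fun j hj ↦ (hx_eq j hj.le).trans (hagree j hj), ?_⟩
    exact (hx_eq i le_rfl).trans_lt hlt
  · rw [toLex_apply, update_self] at hlt
    exact hlt.not_gt hy
  · have hc := hagree γ hγi
    rw [toLex_apply, update_self] at hc
    exact hy.ne' hc

theorem toLex_notMem_Ioo_update_update_of_gt {x y : ι → α} {γ δ : ι} {c m : α} (hγδ : γ ≤ δ)
    (hy : c < y γ) :
    toLex y ∉ Ioo (toLex (update x δ m)) (toLex (update x γ c)) := by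
  rintro ⟨hlo, hhi⟩
  refine toLex_notMem_Ioo_update_update_of_lt (x := toDual ∘ x) (y := toDual ∘ y) (m := toDual m)
    hγδ (toDual_lt_toDual.2 hy) ⟨?_, ?_⟩
  · rw [← comp_update]
    exact toLex_toDual_comp_lt_iff.2 hhi
  · rw [← comp_update]
    exact toLex_toDual_comp_lt_iff.2 hlo

end LinearOrder

section CompleteLinearOrder

variable [WellFoundedLT ι] [CompleteLinearOrder α]

noncomputable def lexSup (s : Set (Lex (ι → α))) : ι → α :=
  wellFounded_lt.fix fun i rec ↦ sSup ((fun x : Lex (ι → α) ↦ ofLex x i) ''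
    {x ∈ s | ∀ j (hj : j < i), ofLex x j = rec j hj})

theorem lexSup_apply (s : Set (Lex (ι → α))) (i : ι) :
    lexSup s i = sSup ((fun x : Lex (ι → α) ↦ ofLex x i) ''
      {x ∈ s | ∀ j < i, ofLex x j = lexSup s j}) := by
  rw [lexSup, WellFounded.fix_eq]

theorem isLUB_toLex_lexSup (s : Set (Lex (ι → α))) : IsLUB s (toLex (lexSup s)) := by
  refine ⟨fun x hx ↦ not_lt.1 ?_, fun u hu ↦ not_lt.1 ?_⟩
  · rintro ⟨i, hagree, hlt⟩
    have : ofLex x i ≤ lexSup s i :=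
      lexSup_apply s i ▸ le_sSup ⟨x, ⟨hx, fun j hj ↦ (hagree j hj).symm⟩, rfl⟩
    exact this.not_gt hlt
  · rintro ⟨i, hagree, hlt⟩
    change ofLex u i < lexSup s i at hlt
    rw [lexSup_apply, lt_sSup_iff] at hlt
    obtain ⟨_, ⟨x, ⟨hx, hx_agree⟩, rfl⟩, hux⟩ := hlt
    exact (hu hx).not_gt ⟨i, fun j hj ↦ (hagree j hj).trans (hx_agree j hj).symm, hux⟩

noncomputable instance Lex.completeLinearOrder : CompleteLinearOrder (Lex (ι → α)) where
  __ := Lex.linearOrder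
  __ := LinearOrder.toBiheytingAlgebra (Lex (ι → α))
  __ := (inferInstance : BoundedOrder (Lex (ι → α)))
  __ := @completeLatticeOfSup (Lex (ι → α)) _ ⟨fun s ↦ toLex (lexSup s)⟩ isLUB_toLex_lexSup

end CompleteLinearOrder

section Topology

variable [WellFoundedLT ι] [LinearOrder α] [DenselyOrdered α] [TopologicalSpace α]
  [OrderTopology α] [TopologicalSpace (Lex (ι → α))] [OrderTopology (Lex (ι → α))]

theorem exists_eq_ite_top_of_mapClusterPt [OrderTop α] {z x : ι → α}
    (hx : MapClusterPt (toLex x) (𝓝 z) toLex) (hzx : toLex z < toLex x) :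
    ∃ γ, x = fun β ↦ if β < γ then z β else ⊤ := by
  obtain ⟨γ, hagree, hlt⟩ := hzx
  refine ⟨γ, funext fun β ↦ ?_⟩
  rcases lt_or_ge β γ with hβ | hβ
  · rw [if_pos hβ]
    exact (hagree β hβ).symm
  rw [if_neg hβ.not_gt, ← top_le_iff]
  by_contra hxβ
  obtain ⟨c, hzc, hcx⟩ := exists_between hlt
  have hV : ∀ᶠ y in 𝓝 z, y γ < c :=
    (continuous_apply γ).continuousAt.eventually (eventually_lt_nhds hzc)
  have hN : Ioo (toLex (update x γ c)) (toLex (update x β ⊤)) ∈ 𝓝 (toLex x) :=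
    Ioo_mem_nhds (toLex_update_lt_self_iff.2 hcx) (lt_toLex_update_self_iff.2 (not_le.1 hxβ))
  obtain ⟨y, hyN, hyV⟩ := ((mapClusterPt_iff_frequently.1 hx _ hN).and_eventually hV).exists
  exact toLex_notMem_Ioo_update_update_of_lt hβ hyV hyN

theorem exists_eq_ite_bot_of_mapClusterPt [OrderBot α] {z x : ι → α}
    (hx : MapClusterPt (toLex x) (𝓝 z) toLex) (hxz : toLex x < toLex z) :
    ∃ γ, x = fun β ↦ if β < γ then z β else ⊥ := by
  obtain ⟨γ, hagree, hlt⟩ := hxz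
  refine ⟨γ, funext fun β ↦ ?_⟩
  rcases lt_or_ge β γ with hβ | hβ
  · rw [if_pos hβ]
    exact hagree β hβ
  rw [if_neg hβ.not_gt, ← le_bot_iff]
  by_contra hxβ
  obtain ⟨c, hxc, hcz⟩ := exists_between hlt
  have hV : ∀ᶠ y in 𝓝 z, c < y γ :=
    (continuous_apply γ).continuousAt.eventually (eventually_gt_nhds hcz)
  have hN : Ioo (toLex (update x β ⊥)) (toLex (update x γ c)) ∈ 𝓝 (toLex x) :=
    Ioo_mem_nhds (toLex_update_lt_self_iff.2 (not_le.1 hxβ)) (lt_toLex_update_self_iff.2 hxc)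
  obtain ⟨y, hyN, hyV⟩ := ((mapClusterPt_iff_frequently.1 hx _ hN).and_eventually hV).exists
  exact toLex_notMem_Ioo_update_update_of_gt hβ hyV hyN

theorem countable_setOf_mapClusterPt_toLex [Countable ι] [BoundedOrder α] (z : ι → α) :
    {x : Lex (ι → α) | MapClusterPt x (𝓝 z) toLex}.Countable := by
  refine (((countable_range fun γ ↦ toLex fun β ↦ if β < γ then z β else ⊤).union
    (countable_range fun γ ↦ toLex fun β ↦ if β < γ then z β else ⊥)).insert (toLex z)).mono ?_
  intro x hx
  rcases lt_trichotomy (toLex z) x with hzx | rfl | hxz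
  · obtain ⟨γ, hγ⟩ := exists_eq_ite_top_of_mapClusterPt (x := ofLex x) hx hzx
    exact .inr (.inl ⟨γ, hγ.symm⟩)
  · exact .inl rfl
  · obtain ⟨γ, hγ⟩ := exists_eq_ite_bot_of_mapClusterPt (x := ofLex x) hx hxz
    exact .inr (.inr ⟨γ, hγ.symm⟩)

end Topology

end Pi

section ClusterSets

variable {X : Type*} [TopologicalSpace X]

theorem isOpen_setOf_mapClusterPt_subset {Y : Type*} [TopologicalSpace Y] [CompactSpace X]
    (f : Y → X) {U : Set X} (hU : IsOpen U) :
    IsOpen {y | {x | MapClusterPt x (𝓝 y) f} ⊆ U} := by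
  refine isOpen_iff_mem_nhds.2 fun y hy ↦ ?_
  obtain ⟨A, hA, hAU⟩ : ∃ A ∈ map f (𝓝 y), closure A ⊆ U := by
    rw [← mem_lift'_sets (monotone_closure X)]
    exact isCompact_univ.adherence_nhdset (le_principal_iff.2 univ_mem) hU
      fun x _ hx ↦ hy (clusterPt_lift'_closure_iff.1 hx)
  filter_upwards [Eventually.eventually_nhds hA] with y' hy' x hx
  exact hAU (hx.mem_closure_of_mem (s := A) hy')

theorem metrizableSpace_of_countable [CompactSpace X] [T2Space X] [Countable X] :
    MetrizableSpace X := by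
  have := Encodable.ofCountable {p : X × X // p.1 ≠ p.2}
  have (p : {p : X × X // p.1 ≠ p.2}) : ∃ f : C(X, ℝ), f p.1.1 = 0 ∧ f p.1.2 = 1 := by
    obtain ⟨f, hf0, hf1, -⟩ := exists_continuous_zero_one_of_isClosed isClosed_singleton
      isClosed_singleton (disjoint_singleton.2 p.2)
    exact ⟨f, hf0 rfl, hf1 rfl⟩
  choose f hf0 hf1 using this
  exact Metric.PiNatEmbed.TopologicalSpace.MetrizableSpace.of_countable_separating (f ·)
    (fun p ↦ (f p).continuous) fun x y hxy ↦ ⟨⟨(x, y), hxy⟩, by simp [hf0, hf1]⟩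

theorem isKLSigmaLeOmega_of_countable_mapClusterPt {Y : Type} [TopologicalSpace Y]
    [CompactSpace Y] [MetrizableSpace Y] [CompactSpace X] [T2Space X] (f : Y → X)
    (hf : Surjective f) (hcount : ∀ y, {x | MapClusterPt x (𝓝 y) f}.Countable) :
    IsKLSigmaLeOmega X := by
  refine ⟨Y, inferInstance, inferInstance, inferInstance,
    fun y ↦ {x | MapClusterPt x (𝓝 y) f}, eq_univ_of_forall fun x ↦ ?_,
    fun y ↦ isClosed_setOfPred_clusterPt.isCompact,
    fun U hU ↦ isOpen_setOf_mapClusterPt_subset f hU, fun y ↦ ?_⟩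
  · obtain ⟨y, rfl⟩ := hf x
    have : MapClusterPt (f y) (𝓝 y) f :=
      clusterPt_iff_forall_mem_closure.2 fun s hs ↦
        subset_closure (mem_of_mem_nhds (mem_map.1 hs) : y ∈ f ⁻¹' s)
    exact mem_iUnion.2 ⟨y, this⟩
  · show MetrizableSpace {x | MapClusterPt x (𝓝 y) f}
    have := (hcount y).to_subtype
    have : CompactSpace {x | MapClusterPt x (𝓝 y) f} :=
      isCompact_iff_compactSpace.1 isClosed_setOfPred_clusterPt.isCompact
    exact metrizableSpace_of_countable

end ClusterSets

theorem Pi.isKLSigmaLeOmega_lex {ι : Type*} {α : Type} [LinearOrder ι] [WellFoundedLT ι]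
    [Countable ι] [CompleteLinearOrder α] [DenselyOrdered α] [TopologicalSpace α]
    [OrderTopology α] [MetrizableSpace α] [TopologicalSpace (Lex (ι → α))]
    [OrderTopology (Lex (ι → α))] : IsKLSigmaLeOmega (Lex (ι → α)) := by
  obtain ⟨e, he⟩ := Countable.exists_injective_nat ι
  have hrestrict : Continuous fun g : ℕ → α ↦ g ∘ e :=
    continuous_pi fun i ↦ continuous_apply (e i)
  refine isKLSigmaLeOmega_of_countable_mapClusterPt (fun g : ℕ → α ↦ toLex (g ∘ e))
    (toLex.surjective.comp he.surjective_comp_right) fun g ↦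
      (countable_setOf_mapClusterPt_toLex (g ∘ e)).mono fun x hx ↦ ?_
  exact MapClusterPt.of_comp (hrestrict.tendsto g) hx

/-- For every countable ordinal `λ`, the lexicographic power `[0,1]^λ_lex` — the set of
functions `λ → [0,1]` with the lexicographic (well-ordered first difference) order,
equipped with the order topology — is a `KLΣ(≤ω)`-space. -/
theorem lexPow_unitInterval_isKLSigmaLeOmega (lam : Ordinal)
    (hlam : lam.card ≤ Cardinal.aleph0) :
    letI : TopologicalSpace (Lex (lam.ToType → ↥(Set.Icc (0 : ℝ) 1))) :=
      Preorder.topology (Lex (lam.ToType → ↥(Set.Icc (0 : ℝ) 1)))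
    IsKLSigmaLeOmega (Lex (lam.ToType → ↥(Set.Icc (0 : ℝ) 1))) := by
  let : TopologicalSpace (Lex (lam.ToType → ↥(Set.Icc (0 : ℝ) 1))) := Preorder.topology _
  have : OrderTopology (Lex (lam.ToType → ↥(Set.Icc (0 : ℝ) 1))) := ⟨rfl⟩
  have : Countable lam.ToType := by
    rwa [← Cardinal.mk_le_aleph0_iff, Cardinal.mk_toType]
  exact Pi.isKLSigmaLeOmega_lex
end

section
/- The space KD, the quotient of the lexicographic product [0,1]×[0,1]×{0,1} obtained by identifying (t,0,0) with (t,1,1) for every t ∈ [0,1], is not metrizably fibered: there is no continuous map f from KD to a metrizable space M such that f⁻¹(z) is metrizable for every z ∈ M. -/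
open TopologicalSpace

/-- A topological space `X` is metrizably fibered if there is a continuous map from `X`
to a metrizable space all of whose fibers are metrizable. -/
def MetrizablyFibered (X : Type*) [TopologicalSpace X] : Prop :=
  ∃ (M : Type) (_ : TopologicalSpace M), MetrizableSpace M ∧
    ∃ f : X → M, Continuous f ∧ ∀ z : M, MetrizableSpace ↥(f ⁻¹' {z})

/-- The unit interval `[0,1]` as a linearly ordered set. -/
abbrev UnitInt : Type := ↥(Set.Icc (0 : ℝ) 1)

/-- `X = [0,1] ×_lex [0,1] ×_lex {0,1}` : the lexicographic product, where the two-point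
set `{0,1}` is modelled by `Bool` (`false = 0 < 1 = true`). -/
abbrev XD : Type := Lex (UnitInt × Lex (UnitInt × Bool))

/-- `X` carries the order topology of the lexicographic order. -/
noncomputable instance : TopologicalSpace XD := Preorder.topology XD

/-- The identification relation: for each `t ∈ [0,1]`, the point `(t,0,0)` is glued to
the point `(t,1,1)`. -/
def rKD : XD → XD → Prop := fun u v =>
  ∃ t : UnitInt,
    u = toLex (t, toLex ((⟨0, by norm_num⟩ : UnitInt), false)) ∧
    v = toLex (t, toLex ((⟨1, by norm_num⟩ : UnitInt), true))

/-- `KD` : the quotient of `X` identifying `(t,0,0)` with `(t,1,1)` for all `t ∈ [0,1]`,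
with the quotient topology. -/
abbrev KD : Type := Quot rKD

/-!
Each slice `{t} × [0,1] × {0,1}` of `KD` is a double arrow space: for every `x`, the points
`(t,x,0) ≠ (t,x,1)` have the common left limit `(t,x,0)`. In a metrizable space, two functions
on `[0,1]` with common left limits everywhere agree off a countable set, since their distance
tends to `0` from the left at every point, and so exceeds `1/n` only on a set of left-isolated
points. Hence no slice lies in a metrizable fiber of `f`, and we may pick, for each `t`, a point
`(t,v t)` with `f (t,v t) ≠ f (t,0,0)`. As `s ↑ t` both `(s,v s)` and `(s,0,0)` tend to `(t,0,0)`,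
so the same argument applied in `M` to `t ↦ f (t,v t)` and `t ↦ f (t,0,0)` gives a contradiction.
-/

open Filter Topology Set

section LeftLimits

variable {α : Type*} [LinearOrder α] [TopologicalSpace α] [OrderTopology α]
  [SecondCountableTopology α]

theorem countable_setOf_ne_zero_of_tendsto_nhdsLT {δ : α → ℝ}
    (hδ : ∀ x, Tendsto δ (𝓝[<] x) (𝓝 0)) : {x | δ x ≠ 0}.Countable := by
  have hlevel (n : ℕ) : {x | (n + 1 : ℝ)⁻¹ < |δ x|}.Countable := by
    set s := {x | (n + 1 : ℝ)⁻¹ < |δ x|}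
    refine (countable_setOfPred_isolated_left_within (s := s)).mono fun x hx => mem_sep hx ?_
    by_contra hne
    have : (𝓝[s ∩ Iio x] x).NeBot := ⟨hne⟩
    have hsmall : ∀ᶠ y in 𝓝[s ∩ Iio x] x, |δ y| < (n + 1 : ℝ)⁻¹ :=
      ((hδ x).mono_left (nhdsWithin_mono _ inter_subset_right)).abs
        |>.eventually (gt_mem_nhds (by simp; positivity))
    obtain ⟨y, hy, hys⟩ := (hsmall.and (eventually_mem_nhdsWithin.mono fun y hy => hy.1)).exists
    exact (lt_asymm hy hys).elim
  refine (countable_iUnion hlevel).mono fun x hx => ?_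
  obtain ⟨n, hn⟩ := exists_nat_one_div_lt (abs_pos.2 hx)
  exact mem_iUnion.2 ⟨n, by simpa using hn⟩

theorem countable_setOf_ne_of_tendsto_nhdsLT {Y : Type*} [TopologicalSpace Y]
    [MetrizableSpace Y] {a b : α → Y}
    (h : ∀ x, ∃ c, Tendsto a (𝓝[<] x) (𝓝 c) ∧ Tendsto b (𝓝[<] x) (𝓝 c)) :
    {x | a x ≠ b x}.Countable := by
  let := metrizableSpaceMetric Y
  refine (countable_setOf_ne_zero_of_tendsto_nhdsLT (δ := fun x => dist (a x) (b x))
    fun x => ?_).mono fun x hx => dist_ne_zero.2 hx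
  obtain ⟨c, ha, hb⟩ := h x
  simpa using ha.dist hb

theorem exists_eq_of_tendsto_nhdsLT [Uncountable α] {Y : Type*} [TopologicalSpace Y]
    [MetrizableSpace Y] {a b : α → Y}
    (h : ∀ x, ∃ c, Tendsto a (𝓝[<] x) (𝓝 c) ∧ Tendsto b (𝓝[<] x) (𝓝 c)) :
    ∃ x, a x = b x := by
  by_contra! hne
  exact not_countable_univ (by simpa [hne] using countable_setOf_ne_of_tendsto_nhdsLT h)

end LeftLimits

section Lex

variable {α β : Type*} [LinearOrder α] [LinearOrder β]

theorem Prod.Lex.lt_toLex_bot_iff [OrderBot β] {u : α ×ₗ β} {t : α} :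
    u < toLex (t, ⊥) ↔ (ofLex u).1 < t := by
  simp [Prod.Lex.lt_iff]

theorem Prod.Lex.tendsto_toLex_nhdsLT_toLex_bot [OrderBot β] [TopologicalSpace α]
    [OrderTopology α] [TopologicalSpace (α ×ₗ β)] [OrderTopology (α ×ₗ β)] (w : α → β) (t : α) :
    Tendsto (fun s => toLex (s, w s)) (𝓝[<] t) (𝓝 (toLex (t, ⊥))) := by
  refine tendsto_order.2 ⟨fun u hu => ?_, fun u hu => ?_⟩
  · filter_upwards [Ioo_mem_nhdsLT (lt_toLex_bot_iff.1 hu)] with s hs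
    exact Prod.Lex.lt_iff.2 (Or.inl hs.1)
  · filter_upwards [self_mem_nhdsWithin] with s hs
    exact (toLex_lt_toLex.2 (Or.inl hs)).trans hu

theorem Prod.Lex.isEmbedding_toLex_mk [TopologicalSpace β] [OrderTopology β]
    [TopologicalSpace (α ×ₗ β)] [OrderTopology (α ×ₗ β)] (t : α) :
    IsEmbedding fun v : β => toLex (t, v) := by
  refine StrictMono.isEmbedding_of_ordConnected (fun v v' h => toLex_lt_toLex.2 (Or.inr ⟨rfl, h⟩))
    ⟨?_⟩
  rintro _ ⟨v, rfl⟩ _ ⟨v', rfl⟩ u ⟨hvu, huv'⟩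
  refine ⟨(ofLex u).2, ?_⟩
  have : (ofLex u).1 = t := le_antisymm (monotone_fst_ofLex huv') (monotone_fst_ofLex hvu)
  simp [← this]

end Lex

instance : Uncountable UnitInt :=
  Cardinal.aleph0_lt_mk_iff.mp <| by
    rw [Cardinal.mk_Icc_real zero_lt_one]; exact Cardinal.aleph0_lt_continuum

noncomputable instance : TopologicalSpace (Lex (UnitInt × Bool)) := Preorder.topology _

instance : OrderTopology (Lex (UnitInt × Bool)) := ⟨rfl⟩

instance : OrderTopology XD := ⟨rfl⟩

theorem mk_toLex_false_ne_mk_toLex_true (t x : UnitInt) :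
    Quot.mk rKD (toLex (t, toLex (x, false))) ≠ Quot.mk rKD (toLex (t, toLex (x, true))) := by
  have hne_bot (y : UnitInt) : toLex (y, true) ≠ ⊥ := fun h => by
    cases congrArg (fun w => (ofLex w).2) h
  -- `rKD` glues `(t, ⊥)` to `(t, ⊤)`, so collapsing `⊥` and `⊤` in the second factor respects it
  let glue (u : XD) : Lex (UnitInt × Bool) := if (ofLex u).2 = ⊥ then ⊤ else (ofLex u).2
  have hglue : ∀ u v, rKD u v → glue u = glue v := by
    rintro _ _ ⟨s, rfl, rfl⟩
    exact (if_pos rfl).trans (if_neg (hne_bot _)).symm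
  intro h
  have : glue _ = glue _ := congrArg (Quot.lift glue hglue) h
  simp only [glue, ofLex_toLex, hne_bot, if_false] at this
  by_cases hbot : toLex (x, false) = (⊥ : Lex (UnitInt × Bool))
  · simp only [hbot, if_true] at this
    have h0 : x = ⊥ := congrArg (fun w => (ofLex w).1) hbot
    have h1 : ⊤ = x := congrArg (fun w => (ofLex w).1) this
    exact absurd (h0 ▸ h1) (by simp)
  · simp only [hbot, if_false] at this
    cases congrArg (fun w => (ofLex w).2) this

theorem not_metrizableSpace_of_slice_subset {S : Set KD} {t : UnitInt}
    (hS : ∀ v, Quot.mk rKD (toLex (t, v)) ∈ S) : ¬ MetrizableSpace S := by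
  intro hmet
  let p (e : Bool) (x : UnitInt) : S := ⟨Quot.mk rKD (toLex (t, toLex (x, e))), hS _⟩
  have hlim (e : Bool) (x : UnitInt) : Tendsto (p e) (𝓝[<] x) (𝓝 (p false x)) := by
    rw [IsEmbedding.subtypeVal.tendsto_nhds_iff]
    exact (continuous_quot_mk.tendsto _).comp <|
      ((Prod.Lex.isEmbedding_toLex_mk t).continuous.tendsto _).comp <|
        Prod.Lex.tendsto_toLex_nhdsLT_toLex_bot (fun _ => e) x
  obtain ⟨x, hx⟩ := exists_eq_of_tendsto_nhdsLT fun x => ⟨_, hlim false x, hlim true x⟩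
  exact mk_toLex_false_ne_mk_toLex_true t x (congrArg Subtype.val hx)

/-- The space `KD` is not metrizably fibered. -/
theorem KD_not_metrizablyFibered : ¬ MetrizablyFibered KD := by
  rintro ⟨M, _, _, f, hf, hfib⟩
  have hslice (t : UnitInt) :
      ∃ v, f (Quot.mk rKD (toLex (t, v))) ≠ f (Quot.mk rKD (toLex (t, ⊥))) := by
    by_contra! h
    exact not_metrizableSpace_of_slice_subset (S := f ⁻¹' {_}) h (hfib _)
  choose v hv using hslice
  have hlim (w : UnitInt → Lex (UnitInt × Bool)) (t : UnitInt) :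
      Tendsto (fun s => f (Quot.mk rKD (toLex (s, w s)))) (𝓝[<] t)
        (𝓝 (f (Quot.mk rKD (toLex (t, ⊥))))) :=
    ((hf.comp continuous_quot_mk).tendsto _).comp (Prod.Lex.tendsto_toLex_nhdsLT_toLex_bot w t)
  obtain ⟨t, ht⟩ := exists_eq_of_tendsto_nhdsLT fun t => ⟨_, hlim v t, hlim (fun _ => ⊥) t⟩
  exact hv t ht
end

section
/- The space KD, the quotient of the lexicographic product [0,1]×[0,1]×{0,1} obtained by identifying (t,0,0) with (t,1,1) for every t ∈ [0,1], is a continuous image of a compact Hausdorff 3-fibered space: there exist a compact Hausdorff space F, a continuous surjection F → KD, a metrizable space M and a continuous map g : F → M such that g⁻¹(z) has at most 3 elements for every z ∈ M. -/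
open TopologicalSpace

/-- For `n ≥ 1`, a topological space `X` is `n`-fibered if there is a continuous map from
`X` to a metrizable space all of whose fibers have at most `n` elements. -/
def NFibered (n : ℕ) (X : Type*) [TopologicalSpace X] : Prop :=
  ∃ (M : Type) (_ : TopologicalSpace M), MetrizableSpace M ∧
    ∃ f : X → M, Continuous f ∧ ∀ z : M, (f ⁻¹' {z}).encard ≤ n

/-!
The circle coordinate `(t, s, i) ↦ s mod 1` is well defined on `KD` (both glued points go to `0`)
but not continuous there; take for `F` the closure of its graph in `KD × ℝ/ℤ`, which projects onto
`KD`. On the set of inner points `(t, s, i) ≠ (t, 0, 0), (t, 1, 1)` of a fibre, which is open and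
saturated, the circle coordinate agrees with a continuous function, so there the closure of the
graph is still the graph. Hence the fibre of `F → [0,1] × ℝ/ℤ` over `(t, z)` consists of the glued
point of the fibre over `t` and of inner points `(t, s, i)` with `s ≡ z`, of which there are at most
two, since `s ∈ [0,1)` when `i = 1` and `s ∈ (0,1]` when `i = 0`.

`KD` is compact because `XD` is a complete linear order. It is Hausdorff: the first coordinate
separates points of different fibres, and two points of one fibre are separated by a clopen arc
`[(t, σ, 1), (t, 1, 0)]`, which contains no glued point.
-/

open Set Topology

section General

variable {X Y : Type*} [TopologicalSpace X] [TopologicalSpace Y]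

theorem isClopen_Icc_of_covBy [LinearOrder X] [OrderTopology X] {a a' b b' : X}
    (ha : a ⋖ a') (hb : b ⋖ b') : IsClopen (Icc a' b) := by
  refine ⟨isClosed_Icc, ?_⟩
  rw [← Ici_inter_Iic, ← ha.Ioi_eq, ← hb.Iio_eq]
  exact isOpen_Ioo

theorem t2Space_of_isClopen_separating {f : X → Y} [T2Space Y] (hf : Continuous f)
    (h : ∀ x y, f x = f y → x ≠ y → ∃ U, IsClopen U ∧ x ∈ U ∧ y ∉ U) : T2Space X := by
  refine ⟨fun x y hxy => ?_⟩
  by_cases hfxy : f x = f y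
  · obtain ⟨U, hU, hx, hy⟩ := h x y hfxy hxy
    exact ⟨U, Uᶜ, hU.isOpen, hU.compl.isOpen, hx, hy, disjoint_compl_right⟩
  · exact separated_by_continuous hf hfxy

theorem eq_of_mem_closure_range_graph [T2Space Y] {f g : X → Y} {U : Set X} (hU : IsOpen U)
    (hg : Continuous g) (hfg : EqOn f g U) {x : X} (hx : x ∈ U) {y : Y}
    (h : (x, y) ∈ closure (range fun x => (x, f x))) : y = g x := by
  have hclosed : IsClosed {p : X × Y | p.1 ∈ U → p.2 = g p.1} :=
    isClosed_imp (hU.preimage continuous_fst) (isClosed_eq continuous_snd (hg.comp continuous_fst))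
  refine closure_minimal ?_ hclosed h hx
  rintro _ ⟨x, rfl⟩ hx
  exact hfg hx

end General

namespace Quot

variable {X : Type*} {r : X → X → Prop} {s : Set X}

theorem preimage_mk_image_mk (hs : ∀ a b, r a b → (a ∈ s ↔ b ∈ s)) :
    Quot.mk r ⁻¹' (Quot.mk r '' s) = s := by
  refine Subset.antisymm (fun x ⟨y, hy, hyx⟩ => ?_) (subset_preimage_image _ _)
  have hgen : ∀ {a b}, Relation.EqvGen r a b → (a ∈ s ↔ b ∈ s) := by
    intro a b hab
    induction hab with
    | rel a b hab => exact hs a b hab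
    | refl => rfl
    | symm _ _ _ ih => exact ih.symm
    | trans _ _ _ _ _ ih₁ ih₂ => exact ih₁.trans ih₂
  exact (hgen (Quot.eqvGen_exact hyx)).mp hy

variable [TopologicalSpace X]

theorem isClopen_image_mk (hs : ∀ a b, r a b → (a ∈ s ↔ b ∈ s)) (hso : IsClopen s) :
    IsClopen (Quot.mk r '' s) :=
  isQuotientMap_quot_mk.isClopen_preimage.mp (by rwa [preimage_mk_image_mk hs])

end Quot

namespace Prod.Lex

section CompleteLinearOrder

variable {α β : Type*} [CompleteLinearOrder α] [CompleteLinearOrder β]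

/-- The supremum sits over the supremum `a` of the first coordinates, at the supremum of the part
of `S` over `a` (which is `⊥` when `a` is not attained). -/
noncomputable def lexSup (S : Set (α ×ₗ β)) : α ×ₗ β :=
  let a := sSup ((fun x => (ofLex x).1) '' S)
  toLex (a, sSup {b | toLex (a, b) ∈ S})

theorem isLUB_lexSup (S : Set (α ×ₗ β)) : IsLUB S (lexSup S) := by
  set a := sSup ((fun x => (ofLex x).1) '' S)
  refine ⟨fun x hx => ?_, fun u hu => ?_⟩
  · have hxa : (ofLex x).1 ≤ a := le_sSup ⟨x, hx, rfl⟩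
    refine le_iff'.mpr ⟨hxa, fun h => le_sSup ?_⟩
    change (ofLex x).1 = a at h
    change toLex (a, (ofLex x).2) ∈ S
    rwa [← h]
  · have hau : a ≤ (ofLex u).1 := sSup_le <| by
      rintro _ ⟨x, hx, rfl⟩
      exact monotone_fst_ofLex (hu hx)
    exact le_iff'.mpr ⟨hau, fun h => sSup_le fun b hb => (le_iff'.mp (hu hb)).2 h⟩

noncomputable instance : CompleteLinearOrder (α ×ₗ β) where
  __ := instLinearOrder α β
  __ := boundedOrder
  __ := LinearOrder.toBiheytingAlgebra (α ×ₗ β)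
  sSup := lexSup
  sInf S := lexSup (lowerBounds S)
  isLUB_sSup := isLUB_lexSup
  isGLB_sInf _ := isLUB_lowerBounds.mp (isLUB_lexSup _)

end CompleteLinearOrder

section Topology

variable {α β : Type*} [LinearOrder α] [LinearOrder β] [BoundedOrder β]

/-- The retraction of `α ×ₗ β` onto the fibre over `a`, read in `β`. -/
def fiberProj (a : α) (x : α ×ₗ β) : β :=
  if (ofLex x).1 < a then ⊥ else if a < (ofLex x).1 then ⊤ else (ofLex x).2

theorem fiberProj_toLex_self (a : α) (b : β) : fiberProj a (toLex (a, b)) = b := by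
  simp [fiberProj]

variable [TopologicalSpace (α ×ₗ β)] [OrderTopology (α ×ₗ β)]

theorem continuous_fst_ofLex [TopologicalSpace α] [OrderTopology α] :
    Continuous fun x : α ×ₗ β => (ofLex x).1 := by
  refine OrderTopology.continuous_iff.mpr fun a => ⟨?_, ?_⟩
  · convert isOpen_Ioi (a := toLex (a, (⊤ : β))) using 1
    ext x
    simp [lt_iff]
  · convert isOpen_Iio (a := toLex (a, (⊥ : β))) using 1
    ext x
    simp [lt_iff]

theorem continuous_fiberProj [TopologicalSpace β] [OrderTopology β] (a : α) :
    Continuous (fiberProj (β := β) a) := by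
  refine OrderTopology.continuous_iff.mpr fun b => ⟨?_, ?_⟩
  · rcases eq_or_ne b ⊤ with rfl | hb
    · simp
    convert isOpen_Ioi (a := toLex (a, b)) using 1
    ext x
    rcases lt_trichotomy (ofLex x).1 a with h | h | h
    · simp [fiberProj, lt_iff, h, h.ne', h.le]
    · simp [fiberProj, lt_iff, h]
    · simp [fiberProj, lt_iff, h, h.not_gt, hb.lt_top]
  · rcases eq_or_ne b ⊥ with rfl | hb
    · simp
    convert isOpen_Iio (a := toLex (a, b)) using 1
    ext x
    rcases lt_trichotomy (ofLex x).1 a with h | h | h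
    · simp [fiberProj, lt_iff, h, hb.bot_lt]
    · simp [fiberProj, lt_iff, h]
    · simp [fiberProj, lt_iff, h, h.not_gt, h.ne']

end Topology

variable {α : Type*} [LinearOrder α]

theorem mem_Icc_toLex_iff {β : Type*} [Preorder β] {a a' : α} {b b₁ b₂ : β} :
    toLex (a', b) ∈ Icc (toLex (a, b₁)) (toLex (a, b₂)) ↔ a' = a ∧ b ∈ Icc b₁ b₂ := by
  simp only [mem_Icc, toLex_le_toLex']
  constructor
  · rintro ⟨⟨h₁, h₂⟩, h₃, h₄⟩
    obtain rfl := le_antisymm h₃ h₁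
    exact ⟨rfl, h₂ rfl, h₄ rfl⟩
  · rintro ⟨rfl, h₁, h₂⟩
    exact ⟨⟨le_rfl, fun _ => h₁⟩, le_rfl, fun _ => h₂⟩

theorem toLex_false_covBy_toLex_true (a : α) : toLex (a, false) ⋖ toLex (a, true) :=
  toLex_covBy_toLex_iff.mpr (Or.inl ⟨rfl, by decide⟩)

theorem bot_lt_toLex_true [OrderBot α] (a : α) : ⊥ < toLex (a, true) :=
  bot_le.trans_lt (toLex_false_covBy_toLex_true a).lt

theorem toLex_false_lt_top [OrderTop α] (a : α) : toLex (a, false) < ⊤ :=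
  (toLex_false_covBy_toLex_true a).lt.trans_le le_top

theorem exists_between_of_lt [DenselyOrdered α] {c d : α ×ₗ Bool} (h : c < d) :
    ∃ a, c ≤ toLex (a, false) ∧ toLex (a, true) ≤ d := by
  cases c with | h c
  cases d with | h d
  obtain ⟨a, i⟩ := c
  obtain ⟨b, j⟩ := d
  cases i
  · exact ⟨a, le_rfl, (toLex_false_covBy_toLex_true a).ge_of_gt h⟩
  cases j
  · have hab : a < b := by simpa [toLex_lt_toLex, Bool.lt_iff] using h
    obtain ⟨m, ham, hmb⟩ := exists_between hab
    exact ⟨m, (toLex_lt_toLex.mpr (Or.inl ham)).le, (toLex_lt_toLex.mpr (Or.inl hmb)).le⟩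
  · exact ⟨b, (toLex_false_covBy_toLex_true b).le_of_lt h, le_rfl⟩

end Prod.Lex

abbrev DoubleArrow : Type := Lex (UnitInt × Bool)

noncomputable instance : TopologicalSpace DoubleArrow := Preorder.topology _

instance : OrderTopology DoubleArrow := ⟨rfl⟩

instance inst_s7 : OrderTopology XD := ⟨rfl⟩

namespace KD

open Prod.Lex

local notation "𝕋" => AddCircle (1 : ℝ)

def q : XD → KD := Quot.mk rKD

theorem q_toLex_bot (t : UnitInt) : q (toLex (t, ⊥)) = q (toLex (t, ⊤)) :=
  Quot.sound ⟨t, rfl, rfl⟩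

theorem exists_q_eq (k : KD) : ∃ t d, d ≠ ⊤ ∧ q (toLex (t, d)) = k := by
  obtain ⟨x, rfl⟩ := Quot.exists_rep k
  rcases eq_or_ne (ofLex x).2 ⊤ with h | h
  · exact ⟨(ofLex x).1, ⊥, bot_ne_top, by rw [q_toLex_bot, ← h]; rfl⟩
  · exact ⟨(ofLex x).1, (ofLex x).2, h, rfl⟩

def fst : KD → UnitInt :=
  Quot.lift (fun x => (ofLex x).1) (by rintro _ _ ⟨t, rfl, rfl⟩; rfl)

@[fun_prop]
theorem continuous_fst : Continuous fst :=
  continuous_quot_lift _ continuous_fst_ofLex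

def innerArc (t σ : UnitInt) : Set XD :=
  Icc (toLex (t, toLex (σ, true))) (toLex (t, toLex (⊤, false)))

theorem isClopen_innerArc (t σ : UnitInt) : IsClopen (innerArc t σ) :=
  isClopen_Icc_of_covBy
    (toLex_covBy_toLex_iff.mpr (Or.inl ⟨rfl, toLex_false_covBy_toLex_true σ⟩))
    (toLex_covBy_toLex_iff.mpr (Or.inl ⟨rfl, toLex_false_covBy_toLex_true ⊤⟩))

theorem innerArc_saturated (t σ : UnitInt) :
    ∀ a b, rKD a b → (a ∈ innerArc t σ ↔ b ∈ innerArc t σ) := by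
  rintro _ _ ⟨u, rfl, rfl⟩
  change toLex (u, ⊥) ∈ _ ↔ toLex (u, ⊤) ∈ _
  rw [innerArc, mem_Icc_toLex_iff, mem_Icc_toLex_iff]
  simp only [mem_Icc, (bot_lt_toLex_true σ).not_ge, (toLex_false_lt_top (⊤ : UnitInt)).not_ge,
    false_and, and_false]

def arc (t σ : UnitInt) : Set KD := q '' innerArc t σ

theorem isClopen_arc (t σ : UnitInt) : IsClopen (arc t σ) :=
  Quot.isClopen_image_mk (innerArc_saturated t σ) (isClopen_innerArc t σ)

theorem q_mem_arc_iff {t σ : UnitInt} {x : XD} : q x ∈ arc t σ ↔ x ∈ innerArc t σ := by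
  rw [arc, ← mem_preimage, q, Quot.preimage_mk_image_mk (innerArc_saturated t σ)]

theorem exists_arc_separating (t : UnitInt) {c d : DoubleArrow} (h : c < d) (hd : d ≠ ⊤) :
    ∃ σ, q (toLex (t, d)) ∈ arc t σ ∧ q (toLex (t, c)) ∉ arc t σ := by
  obtain ⟨σ, hcσ, hσd⟩ := exists_between_of_lt h
  refine ⟨σ, q_mem_arc_iff.mpr ?_, fun hc => ?_⟩
  · exact mem_Icc_toLex_iff.mpr ⟨rfl, hσd, (toLex_false_covBy_toLex_true _).le_of_lt hd.lt_top⟩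
  · have := (mem_Icc_toLex_iff.mp (q_mem_arc_iff.mp hc)).2.1
    exact (hcσ.trans_lt (toLex_false_covBy_toLex_true σ).lt).not_ge this

instance : T2Space KD := by
  refine t2Space_of_isClopen_separating continuous_fst fun k₁ k₂ hfst hne => ?_
  obtain ⟨t, c, hc, rfl⟩ := exists_q_eq k₁
  obtain ⟨t', d, hd, rfl⟩ := exists_q_eq k₂
  obtain rfl : t = t' := hfst
  rcases lt_or_gt_of_ne (fun h : c = d => hne (h ▸ rfl)) with h | h
  · obtain ⟨σ, hd, hc⟩ := exists_arc_separating t h hd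
    exact ⟨(arc t σ)ᶜ, (isClopen_arc t σ).compl, hc, not_not.mpr hd⟩
  · obtain ⟨σ, hc, hd⟩ := exists_arc_separating t h hc
    exact ⟨arc t σ, isClopen_arc t σ, hc, hd⟩

def circleCoord : KD → 𝕋 :=
  Quot.lift (fun x => (((ofLex (ofLex x).2).1 : ℝ) : 𝕋))
    (by rintro _ _ ⟨t, rfl, rfl⟩; exact (AddCircle.coe_period (p := (1 : ℝ))).symm)

noncomputable def circleCoordAt (t : UnitInt) : KD → 𝕋 :=
  Quot.lift (fun x => (((ofLex (fiberProj t x)).1 : ℝ) : 𝕋)) (by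
    rintro _ _ ⟨u, rfl, rfl⟩
    rcases lt_trichotomy u t with h | rfl | h
    · simp [fiberProj, h]
    · simpa [fiberProj] using (AddCircle.coe_period (p := (1 : ℝ))).symm
    · simp [fiberProj, h, h.not_gt])

theorem continuous_circleCoordAt (t : UnitInt) : Continuous (circleCoordAt t) :=
  continuous_quot_lift _ <| (AddCircle.continuous_mk' 1).comp <|
    continuous_subtype_val.comp <| continuous_fst_ofLex.comp (continuous_fiberProj t)

theorem circleCoordAt_q_self (t : UnitInt) (d : DoubleArrow) :
    circleCoordAt t (q (toLex (t, d))) = circleCoord (q (toLex (t, d))) := by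
  simp [circleCoordAt, circleCoord, q, fiberProj_toLex_self]

def graphClosure : Set (KD × 𝕋) := closure (range fun k => (k, circleCoord k))

theorem circleCoord_eq_of_mem_graphClosure {t : UnitInt} {d : DoubleArrow} (hd₀ : d ≠ ⊥)
    (hd₁ : d ≠ ⊤) {z : 𝕋} (h : (q (toLex (t, d)), z) ∈ graphClosure) :
    z = circleCoord (q (toLex (t, d))) := by
  have hEqOn : EqOn circleCoord (circleCoordAt t) (arc t ⊥) := by
    rintro _ ⟨⟨u, e⟩, hx, rfl⟩
    obtain rfl := (mem_Icc_toLex_iff.mp hx).1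
    exact (circleCoordAt_q_self u e).symm
  have hd : q (toLex (t, d)) ∈ arc t ⊥ := q_mem_arc_iff.mpr <| mem_Icc_toLex_iff.mpr
    ⟨rfl, (toLex_false_covBy_toLex_true _).ge_of_gt hd₀.bot_lt,
      (toLex_false_covBy_toLex_true _).le_of_lt hd₁.lt_top⟩
  rw [eq_of_mem_closure_range_graph (isClopen_arc t ⊥).isOpen (continuous_circleCoordAt t) hEqOn
    hd h, circleCoordAt_q_self]

theorem exists_eq_or_eq_of_coe_fst_eq (z : 𝕋) :
    ∃ a b : UnitInt, ∀ d : DoubleArrow, d ≠ ⊥ → d ≠ ⊤ →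
      (((ofLex d).1 : ℝ) : 𝕋) = z → d = toLex (a, true) ∨ d = toLex (b, false) := by
  set a := AddCircle.equivIco 1 0 z
  set b := AddCircle.equivIoc 1 0 z
  have ha : (a : ℝ) ∈ Icc 0 1 := Ico_subset_Icc_self (by simpa using a.2)
  have hb : (b : ℝ) ∈ Icc 0 1 := Ioc_subset_Icc_self (by simpa using b.2)
  refine ⟨⟨a, ha⟩, ⟨b, hb⟩, ?_⟩
  rintro ⟨σ, i⟩ hd₀ hd₁ hz
  cases i
  · right
    have hne : (0 : ℝ) ≠ σ := fun h => hd₀ (by obtain rfl : σ = ⊥ := Subtype.ext h.symm; rfl)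
    have hσ : (σ : ℝ) ∈ Ioc 0 (0 + 1) := by simpa using ⟨σ.2.1.lt_of_ne hne, σ.2.2⟩
    have := (AddCircle.coe_eq_coe_iff_of_mem_Ioc hσ b.2).mp (hz.trans AddCircle.coe_equivIoc.symm)
    obtain rfl : σ = ⟨b, hb⟩ := Subtype.ext this
    rfl
  · left
    have hne : (σ : ℝ) ≠ 1 := fun h => hd₁ (by obtain rfl : σ = ⊤ := Subtype.ext h; rfl)
    have hσ : (σ : ℝ) ∈ Ico 0 (0 + 1) := by simpa using ⟨σ.2.1, σ.2.2.lt_of_ne hne⟩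
    have := (AddCircle.coe_eq_coe_iff_of_mem_Ico hσ a.2).mp (hz.trans AddCircle.coe_equivIco.symm)
    obtain rfl : σ = ⟨a, ha⟩ := Subtype.ext this
    rfl

theorem encard_fiber_le_three (t : UnitInt) (z : 𝕋) :
    {k : KD | fst k = t ∧ (k, z) ∈ graphClosure}.encard ≤ 3 := by
  obtain ⟨a, b, hab⟩ := exists_eq_or_eq_of_coe_fst_eq z
  have hsub : {k : KD | fst k = t ∧ (k, z) ∈ graphClosure} ⊆
      {q (toLex (t, ⊥)), q (toLex (t, toLex (a, true))), q (toLex (t, toLex (b, false)))} := by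
    rintro k ⟨rfl, hk⟩
    obtain ⟨t, d, hd₁, rfl⟩ := exists_q_eq k
    rcases eq_or_ne d ⊥ with rfl | hd₀
    · exact Or.inl rfl
    have hz := circleCoord_eq_of_mem_graphClosure hd₀ hd₁ hk
    rcases hab d hd₀ hd₁ hz.symm with rfl | rfl
    · exact Or.inr (Or.inl rfl)
    · exact Or.inr (Or.inr rfl)
  refine (encard_le_encard hsub).trans <| (encard_insert_le _ _).trans ?_
  rw [show (3 : ℕ∞) = 2 + 1 from rfl]
  gcongr
  exact (encard_insert_le _ _).trans (by rw [encard_singleton]; rfl)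

theorem nFibered_graphClosure : NFibered 3 graphClosure := by
  refine ⟨UnitInt × 𝕋, inferInstance, inferInstance, fun w => (fst w.1.1, w.1.2), by fun_prop,
    fun ⟨t, z⟩ => (encard_le_encard_of_injOn (f := fun w => w.1.1) ?_ ?_).trans
      (encard_fiber_le_three t z)⟩
  · rintro w hw
    obtain ⟨rfl, rfl⟩ := Prod.mk.inj hw
    exact ⟨rfl, w.2⟩
  · rintro w hw w' hw' h
    exact Subtype.ext (Prod.ext h ((Prod.mk.inj hw).2.trans (Prod.mk.inj hw').2.symm))

end KD

/-- The space `KD` is a continuous image of a compact Hausdorff `3`-fibered space. -/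
theorem KD_image_of_threeFibered :
    ∃ (F : Type) (_ : TopologicalSpace F), CompactSpace F ∧ T2Space F ∧
      NFibered 3 F ∧ ∃ g : F → KD, Continuous g ∧ Function.Surjective g :=
  ⟨KD.graphClosure, inferInstance, isCompact_iff_compactSpace.mp isClosed_closure.isCompact,
    inferInstance, KD.nFibered_graphClosure, fun w => w.1.1, by fun_prop,
    fun k => ⟨⟨(k, KD.circleCoord k), subset_closure ⟨k, rfl⟩⟩, rfl⟩⟩
end

section
/- Let n be a positive integer. A compact Hausdorff space K satisfies odeg(K) ≤ n if and only if K is a continuous image of a compact Hausdorff n-fibered space. -/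
open TopologicalSpace

/-- `odeg(K) ≤ n` : there is a countable family `𝒪` of open subsets of `K` such that for
all pairwise distinct points `x₀, …, xₙ` of `K` there are `W₀, …, Wₙ ∈ 𝒪` with
`x_i ∈ W_i` for each `i` and `W₀ ∩ ⋯ ∩ Wₙ = ∅`. -/
def OdegLe (K : Type*) [TopologicalSpace K] (n : ℕ) : Prop :=
  ∃ O : Set (Set K), O.Countable ∧ (∀ W ∈ O, IsOpen W) ∧
    ∀ x : Fin (n + 1) → K, Function.Injective x →
      ∃ W : Fin (n + 1) → Set K,
        (∀ i, W i ∈ O) ∧ (∀ i, x i ∈ W i) ∧ (⋂ i, W i) = ∅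

universe u

/-!
If `V₀, V₁, …` enumerate a family witnessing `odeg K ≤ n`, let `L` be the closure in
`K × 2^ℕ` of the graph of `x ↦ (𝟙_{V_k} x)ₖ`. It is compact and maps onto `K`, and the
projection `L → 2^ℕ` has fibers of size at most `n`: if `(x₀, z), …, (xₙ, z) ∈ L` with
distinct `xᵢ ∈ V_{κ i}` and `⋂ V_{κ i} = ∅`, then openness of the `V_{κ i}` forces
`z (κ i) = 1` for all `i`, and then a point of the graph close to `(x₀, z)` lies in every
`V_{κ i}`.

Conversely, let `g : L → K` be onto and `f : L → M` have fibers of size at most `n`, where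
we may take `M` compact metrizable. For distinct `x₀, …, xₙ` the compact sets `f (g⁻¹ xᵢ)`
have empty intersection, so by normality they have open neighbourhoods with empty intersection,
which may be taken from the countable family of finite unions of basic open sets. Since `g`
is a closed map, the sets `{x | f (g⁻¹ x) ⊆ W}` are open, and they witness `odeg K ≤ n`.
-/

open Set Function

theorem Set.encard_le_coe_iff_forall_not_injective {α : Type*} {s : Set α} {n : ℕ} :
    s.encard ≤ n ↔ ∀ x : Fin (n + 1) → α, (∀ i, x i ∈ s) → ¬ Injective x := by
  constructor
  · intro hs x hxs hx
    have : ((n + 1 : ℕ) : ℕ∞) ≤ n :=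
      calc ((n + 1 : ℕ) : ℕ∞) = ENat.card (Fin (n + 1)) := by simp
        _ ≤ (range x).encard := hx.encard_range
        _ ≤ s.encard := encard_mono (range_subset_iff.mpr hxs)
        _ ≤ n := hs
    exact absurd (Nat.cast_le.mp this) (by omega)
  · intro h
    by_contra! hlt
    obtain ⟨t, hts, ht⟩ := exists_subset_encard_eq (Order.add_one_le_of_lt hlt)
    have : Finite t := finite_of_encard_eq_coe ht
    have hcard : Nat.card t = n + 1 := by
      rw [Nat.card_coe_set_eq, ncard_def, ht]; rfl
    let e := (Finite.equivFin t).trans (finCongr hcard)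
    exact h (fun i => (e.symm i : α)) (fun i => hts (e.symm i).2)
      (Subtype.val_injective.comp e.symm.injective)

theorem exists_isOpen_superset_iInter_eq_empty {X ι : Type*} [TopologicalSpace X]
    [NormalSpace X] [Finite ι] {F : ι → Set X} (hF : ∀ i, IsClosed (F i))
    (h : ⋂ i, F i = ∅) :
    ∃ U : ι → Set X, (∀ i, IsOpen (U i)) ∧ (∀ i, F i ⊆ U i) ∧ ⋂ i, U i = ∅ := by
  obtain ⟨v, hv, hvc, hvF⟩ := exists_iUnion_eq_closed_subset (u := fun i => (F i)ᶜ)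
    (fun i => (hF i).isOpen_compl) (fun _ => toFinite _)
    (by rw [← compl_iInter, h, compl_empty])
  refine ⟨fun i => (v i)ᶜ, fun i => (hvc i).isOpen_compl, fun i => ?_, ?_⟩
  · exact subset_compl_comm.mp (hvF i)
  · rw [← compl_iUnion, hv, compl_univ]

theorem exists_countable_isOpen_between_isCompact_isOpen (X : Type*) [TopologicalSpace X]
    [SecondCountableTopology X] :
    ∃ 𝒰 : Set (Set X), 𝒰.Countable ∧ (∀ W ∈ 𝒰, IsOpen W) ∧
      ∀ C U, IsCompact C → IsOpen U → C ⊆ U → ∃ W ∈ 𝒰, C ⊆ W ∧ W ⊆ U := by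
  have hB := isBasis_countableBasis X
  refine ⟨sUnion '' {t | t.Finite ∧ t ⊆ countableBasis X},
    (countable_ofPred_finite_subset (countable_countableBasis X)).image _, ?_, ?_⟩
  · rintro _ ⟨t, ⟨-, htB⟩, rfl⟩
    exact isOpen_sUnion fun b hb => hB.isOpen (htB hb)
  · intro C U hC hU hCU
    rw [hB.open_eq_sUnion' hU, sUnion_eq_biUnion] at hCU
    obtain ⟨t, htB, htf, hCt⟩ := hC.elim_finite_subcover_image (fun b hb => hB.isOpen hb.1) hCU
    refine ⟨⋃₀ t, mem_image_of_mem _ ⟨htf, fun b hb => (htB hb).1⟩, ?_,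
      sUnion_subset fun b hb => (htB hb).2⟩
    rwa [sUnion_eq_biUnion]

theorem iInter_image_preimage_singleton_eq_empty {L K M : Type*} {n : ℕ} {f : L → M}
    (hf : ∀ z, (f ⁻¹' {z}).encard ≤ n) (g : L → K) {x : Fin (n + 1) → K}
    (hx : Injective x) :
    ⋂ i, f '' (g ⁻¹' {x i}) = ∅ := by
  refine eq_empty_iff_forall_notMem.mpr fun z hz => ?_
  choose y hgy hfy using mem_iInter.mp hz
  refine encard_le_coe_iff_forall_not_injective.mp (hf z) y (fun i => hfy i) fun i j hij => ?_
  exact hx (by rw [← hgy i, ← hgy j, hij])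

theorem OdegLe.of_continuous_surjective {L K M : Type*} [TopologicalSpace L]
    [TopologicalSpace K] [TopologicalSpace M] [CompactSpace L] [T2Space K]
    [SecondCountableTopology M] [T4Space M] {n : ℕ} {f : L → M} (hf : Continuous f)
    (hfib : ∀ z, (f ⁻¹' {z}).encard ≤ n) {g : L → K} (hg : Continuous g)
    (hgs : Surjective g) : OdegLe K n := by
  obtain ⟨𝒰, h𝒰c, h𝒰o, h𝒰⟩ := exists_countable_isOpen_between_isCompact_isOpen M
  refine ⟨(fun W => kernImage g (f ⁻¹' W)) '' 𝒰, h𝒰c.image _, ?_, fun x hx => ?_⟩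
  · rintro _ ⟨W, hW, rfl⟩
    exact isClosedMap_iff_kernImage.mp hg.isClosedMap ((h𝒰o W hW).preimage hf)
  have hC : ∀ i, IsCompact (f '' (g ⁻¹' {x i})) := fun i =>
    ((isClosed_singleton.preimage hg).isCompact).image hf
  obtain ⟨U, hUo, hCU, hU⟩ := exists_isOpen_superset_iInter_eq_empty
    (fun i => (hC i).isClosed) (iInter_image_preimage_singleton_eq_empty hfib g hx)
  choose W hW𝒰 hCW hWU using fun i => h𝒰 _ (U i) (hC i) (hUo i) (hCU i)
  refine ⟨fun i => kernImage g (f ⁻¹' W i), fun i => mem_image_of_mem _ (hW𝒰 i),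
    fun i y hy => hCW i (mem_image_of_mem f hy), ?_⟩
  refine eq_empty_iff_forall_notMem.mpr fun p hp => ?_
  obtain ⟨y, rfl⟩ := hgs p
  have : f y ∈ ⋂ i, U i := mem_iInter.mpr fun i => hWU i (mem_iInter.mp hp i rfl)
  rwa [hU] at this

theorem OdegLe.of_nFibered_of_continuous_surjective {L K : Type*} [TopologicalSpace L]
    [TopologicalSpace K] [CompactSpace L] [T2Space K] {n : ℕ} (hL : NFibered n L)
    {g : L → K} (hg : Continuous g) (hgs : Surjective g) : OdegLe K n := by
  obtain ⟨M, _, _, f, hf, hfib⟩ := hL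
  have : CompactSpace (range f) := isCompact_iff_compactSpace.mp (isCompact_range hf)
  refine .of_continuous_surjective (f := rangeFactorization f) (hf.subtype_mk _)
    (fun z => ?_) hg hgs
  convert hfib z using 2
  ext y
  simp [rangeFactorization, Subtype.ext_iff]

section CodeGraph

variable {K : Type*} [TopologicalSpace K] (V : ℕ → Set K)

noncomputable def membershipCode (x : K) : ℕ → Bool := fun k => (V k).boolIndicator x

def codeGraphClosure : Set (K × (ℕ → Bool)) :=
  closure (range fun x => (x, membershipCode V x))

variable {V}

theorem exists_mem_membershipCode_eqOn_of_mem_codeGraphClosure {p : K × (ℕ → Bool)}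
    (hp : p ∈ codeGraphClosure V) {U : Set K} (hU : IsOpen U) (hpU : p.1 ∈ U) (s : Finset ℕ) :
    ∃ a ∈ U, ∀ k ∈ s, membershipCode V a k = p.2 k := by
  have hN : IsOpen (U ×ˢ ⋂ k ∈ s, (fun w : ℕ → Bool => w k) ⁻¹' {p.2 k}) :=
    hU.prod (isOpen_biInter_finset fun k _ => (isOpen_discrete _).preimage (continuous_apply k))
  obtain ⟨_, ⟨haU, hak⟩, a, rfl⟩ :=
    mem_closure_iff.mp hp _ hN ⟨hpU, mem_iInter₂.mpr fun _ _ => rfl⟩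
  exact ⟨a, haU, fun k hk => mem_iInter₂.mp hak k hk⟩

theorem apply_eq_true_of_mem_codeGraphClosure {p : K × (ℕ → Bool)}
    (hp : p ∈ codeGraphClosure V) {k : ℕ} (hVk : IsOpen (V k)) (hpV : p.1 ∈ V k) :
    p.2 k = true := by
  obtain ⟨a, haV, hak⟩ := exists_mem_membershipCode_eqOn_of_mem_codeGraphClosure hp hVk hpV {k}
  rw [← hak k (Finset.mem_singleton_self k)]
  exact (mem_iff_boolIndicator _ _).mp haV

theorem nonempty_iInter_of_mem_codeGraphClosure {ι : Type*} [Fintype ι] {p : K × (ℕ → Bool)}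
    (hp : p ∈ codeGraphClosure V) {κ : ι → ℕ} (hκ : ∀ i, p.2 (κ i) = true) :
    (⋂ i, V (κ i)).Nonempty := by
  obtain ⟨a, -, hak⟩ := exists_mem_membershipCode_eqOn_of_mem_codeGraphClosure hp isOpen_univ
    (mem_univ p.1) (Finset.univ.image κ)
  refine ⟨a, mem_iInter.mpr fun i => (mem_iff_boolIndicator _ _).mpr ?_⟩
  rw [← hκ i]
  exact hak (κ i) (Finset.mem_image_of_mem κ (Finset.mem_univ i))

theorem nFibered_codeGraphClosure {n : ℕ} (hV : ∀ k, IsOpen (V k))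
    (hsep : ∀ x : Fin (n + 1) → K, Injective x →
      ∃ κ : Fin (n + 1) → ℕ, (∀ i, x i ∈ V (κ i)) ∧ ⋂ i, V (κ i) = ∅) :
    NFibered n (codeGraphClosure V) := by
  refine ⟨ℕ → Bool, inferInstance, inferInstance, fun p => p.1.2, by fun_prop, fun z => ?_⟩
  refine encard_le_coe_iff_forall_not_injective.mpr fun y (hy : ∀ i, (y i).1.2 = z) hyinj => ?_
  have hx : Injective fun i => (y i).1.1 := fun i j hij =>
    hyinj (Subtype.ext (Prod.ext hij ((hy i).trans (hy j).symm)))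
  obtain ⟨κ, hxκ, hκ⟩ := hsep _ hx
  have hz : ∀ i, (y 0).1.2 (κ i) = true := fun i => by
    rw [hy 0, ← hy i]
    exact apply_eq_true_of_mem_codeGraphClosure (y i).2 (hV _) (hxκ i)
  exact (nonempty_iInter_of_mem_codeGraphClosure (y 0).2 hz).ne_empty hκ

theorem surjective_fst_codeGraphClosure :
    Surjective fun p : codeGraphClosure V => p.1.1 := fun x =>
  ⟨⟨(x, membershipCode V x), subset_closure (mem_range_self x)⟩, rfl⟩

end CodeGraph

theorem OdegLe.exists_seq {K : Type*} [TopologicalSpace K] {n : ℕ} (h : OdegLe K n) :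
    ∃ V : ℕ → Set K, (∀ k, IsOpen (V k)) ∧ ∀ x : Fin (n + 1) → K, Injective x →
      ∃ κ : Fin (n + 1) → ℕ, (∀ i, x i ∈ V (κ i)) ∧ ⋂ i, V (κ i) = ∅ := by
  obtain ⟨O, hOc, hOo, hO⟩ := h
  obtain ⟨V, hV⟩ := (hOc.insert ∅).exists_eq_range (insert_nonempty ∅ O)
  have hVO : ∀ W ∈ O, ∃ k, V k = W := fun W hW =>
    (hV ▸ mem_insert_of_mem ∅ hW : W ∈ range V)
  refine ⟨V, fun k => ?_, fun x hx => ?_⟩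
  · rcases (hV ▸ mem_range_self k : V k ∈ insert ∅ O) with hk | hk
    · exact hk ▸ isOpen_empty
    · exact hOo _ hk
  obtain ⟨W, hWO, hxW, hW⟩ := hO x hx
  choose κ hκ using fun i => hVO _ (hWO i)
  exact ⟨κ, fun i => (hκ i).symm ▸ hxW i, by simpa only [hκ] using hW⟩

theorem odegLe_iff_image_of_nFibered_general (n : ℕ)
    (K : Type u) [TopologicalSpace K] [CompactSpace K] [T2Space K] :
    OdegLe K n ↔
      ∃ (L : Type u) (_ : TopologicalSpace L), CompactSpace L ∧ T2Space L ∧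
        NFibered n L ∧ ∃ g : L → K, Continuous g ∧ Function.Surjective g := by
  constructor
  · intro h
    obtain ⟨V, hV, hsep⟩ := h.exists_seq
    exact ⟨codeGraphClosure V, inferInstance, isCompact_iff_compactSpace.mp
      isClosed_closure.isCompact, inferInstance, nFibered_codeGraphClosure hV hsep,
      fun p => p.1.1, by fun_prop, surjective_fst_codeGraphClosure⟩
  · rintro ⟨L, _, _, _, hL, g, hg, hgs⟩
    exact .of_nFibered_of_continuous_surjective hL hg hgs

/-- A compact Hausdorff space `K` satisfies `odeg(K) ≤ n` (for a positive integer `n`) if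
and only if `K` is a continuous image of a compact Hausdorff `n`-fibered space. -/
theorem odegLe_iff_image_of_nFibered (n : ℕ) (hn : 0 < n)
    (K : Type u) [TopologicalSpace K] [CompactSpace K] [T2Space K] :
    OdegLe K n ↔
      ∃ (L : Type u) (_ : TopologicalSpace L), CompactSpace L ∧ T2Space L ∧
        NFibered n L ∧ ∃ g : L → K, Continuous g ∧ Function.Surjective g :=
  odegLe_iff_image_of_nFibered_general n K
end

section
/- Let n ≥ 2 be an integer, let K be a compact Hausdorff space, and let F ⊆ K be a finite Gδ subset of K. If every closed subset L of K with L ⊆ K \ F satisfies odeg(L) ≤ n−1 (as a subspace), then odeg(K) ≤ n−1. -/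
open TopologicalSpace

/-- A closed Gδ set in a normal space has a shrinking sequence of open neighbourhoods. -/
lemma exists_shrink_seq {K : Type*} [TopologicalSpace K] [NormalSpace K]
    (S : Set K) (hc : IsClosed S) (hg : IsGδ S) :
    ∃ V : ℕ → Set K, (∀ k, IsOpen (V k)) ∧ (∀ k, S ⊆ V k) ∧
      (∀ k, closure (V (k + 1)) ⊆ V k) ∧ (⋂ k, V k) ⊆ S := by
  obtain ⟨U, hUo, hSU⟩ := hg.eq_iInter_nat
  have hSsub : ∀ k, S ⊆ U k := fun k => hSU ▸ Set.iInter_subset U k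
  have key : ∀ (W : Set K) (k : ℕ), IsOpen W → S ⊆ W →
      ∃ W', IsOpen W' ∧ S ⊆ W' ∧ closure W' ⊆ W ∩ U k := by
    intro W k hW hSW
    obtain ⟨u, hu, hsu, hcl⟩ := normal_exists_closure_subset hc (hW.inter (hUo k))
      (Set.subset_inter hSW (hSsub k))
    exact ⟨u, hu, hsu, hcl⟩
  choose! f hfo hfs hfc using key
  set V : ℕ → Set K := fun k => Nat.rec (U 0) (fun k v => f v (k + 1)) k with hV
  have hbasic : ∀ k, IsOpen (V k) ∧ S ⊆ V k := by
    intro k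
    induction k with
    | zero => exact ⟨hUo 0, hSsub 0⟩
    | succ m ih => exact ⟨hfo (V m) (m + 1) ih.1 ih.2, hfs (V m) (m + 1) ih.1 ih.2⟩
  have hstep : ∀ k, closure (V (k + 1)) ⊆ V k ∩ U (k + 1) := fun k =>
    hfc (V k) (k + 1) (hbasic k).1 (hbasic k).2
  refine ⟨V, fun k => (hbasic k).1, fun k => (hbasic k).2,
    fun k => (hstep k).trans Set.inter_subset_left, ?_⟩
  intro z hz
  rw [hSU]
  refine Set.mem_iInter.mpr fun k => ?_
  cases k with
  | zero => exact Set.mem_iInter.mp hz 0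
  | succ m => exact (hstep m (subset_closure (Set.mem_iInter.mp hz (m + 1)))).2

/-- Let `n ≥ 2`, let `K` be compact Hausdorff and `F ⊆ K` a finite `Gδ` set. If every
closed subset `L ⊆ K \ F` satisfies `odeg(L) ≤ n − 1` (as a subspace), then
`odeg(K) ≤ n − 1`. -/
theorem odegLe_of_finite_Gdelta (n : ℕ) (hn : 2 ≤ n)
    (K : Type*) [TopologicalSpace K] [CompactSpace K] [T2Space K]
    (F : Set K) (hFfin : F.Finite) (hFGδ : IsGδ F)
    (h : ∀ L : Set K, IsClosed L → L ⊆ Fᶜ → OdegLe ↥L (n - 1)) :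
    OdegLe K (n - 1) := by
  classical
  have hFc : IsClosed F := hFfin.isClosed
  obtain ⟨V, hVo, hFV, hVc, hVS⟩ := exists_shrink_seq F hFc hFGδ
  have hVanti : ∀ {a b : ℕ}, a ≤ b → V b ⊆ V a := by
    intro a b hab
    induction hab with
    | refl => exact le_refl _
    | step _ ih => exact (subset_closure.trans (hVc _)).trans ih
  -- shrinking systems at points of F
  have hpt : ∀ p ∈ F, ∃ A : ℕ → Set K, (∀ k, IsOpen (A k)) ∧ (∀ k, p ∈ A k) ∧
      (∀ k, closure (A (k + 1)) ⊆ A k) ∧ (⋂ k, A k) ⊆ {p} := by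
    intro p hp
    have hpG : IsGδ ({p} : Set K) := by
      have he : ({p} : Set K) = F ∩ (F \ {p})ᶜ := by
        ext z
        simp only [Set.mem_singleton_iff, Set.mem_inter_iff, Set.mem_compl_iff, Set.mem_diff,
          not_and, not_not]
        constructor
        · rintro rfl; exact ⟨hp, fun _ => rfl⟩
        · rintro ⟨hzF, hz⟩; exact hz hzF
      rw [he]
      exact hFGδ.inter ((hFfin.subset Set.diff_subset).isClosed.isOpen_compl.isGδ)
    obtain ⟨A, h1, h2, h3, h4⟩ := exists_shrink_seq {p} isClosed_singleton hpG
    exact ⟨A, h1, fun k => h2 k rfl, h3, h4⟩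
  choose! A hAo hAp hAc hAsub using hpt
  -- the odeg families on the closed sets (V (k+1))ᶜ
  have hL : ∀ k : ℕ, OdegLe ↥((V (k + 1))ᶜ) (n - 1) := fun k =>
    h _ (hVo (k + 1)).isClosed_compl (Set.compl_subset_compl.mpr (hFV (k + 1)))
  choose O hOc hOopen hOpt using hL
  have hrep : ∀ (k : ℕ) (S : Set ↥((V (k + 1))ᶜ)), S ∈ O k →
      ∃ T : Set K, IsOpen T ∧ Subtype.val ⁻¹' T = S := fun k S hS =>
    isOpen_induced_iff.mp (hOopen k S hS)
  choose! T hTo hTpre using hrep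
  refine ⟨(⋃ p ∈ F, ⋃ k, {A p k, (closure (A p k))ᶜ}) ∪
      ⋃ k, (fun S => T k S ∩ (closure (V (k + 1)))ᶜ) '' O k, ?_, ?_, ?_⟩
  · refine Set.Countable.union ?_ ?_
    · exact Set.Countable.biUnion hFfin.countable fun p _ =>
        Set.countable_iUnion fun k => (Set.finite_singleton _).insert _ |>.countable
    · exact Set.countable_iUnion fun k => (hOc k).image _
  · rintro W (hW | hW)
    · simp only [Set.mem_iUnion] at hW
      obtain ⟨p, hp, k, hW⟩ := hW
      rcases hW with rfl | hW
      · exact hAo p hp k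
      · rw [Set.mem_singleton_iff] at hW
        subst hW
        exact isClosed_closure.isOpen_compl
    · simp only [Set.mem_iUnion] at hW
      obtain ⟨k, S, hS, rfl⟩ := hW
      exact (hTo k S hS).inter isClosed_closure.isOpen_compl
  · intro x hx
    by_cases hex : ∃ i, x i ∈ F
    · obtain ⟨i₀, hi₀⟩ := hex
      set p := x i₀ with hp
      have hclanti : ∀ {a b : ℕ}, a ≤ b → closure (A p b) ⊆ closure (A p a) := by
        intro a b hab
        induction hab with
        | refl => exact le_refl _
        | step _ ih => exact ((hAc p hi₀ _).trans subset_closure).trans ih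
      have hone : ∀ j : Fin (n - 1 + 1), ∃ k : ℕ, j ≠ i₀ → x j ∉ closure (A p k) := by
        intro j
        by_cases hj : j = i₀
        · exact ⟨0, fun hcon => absurd hj hcon⟩
        · have hne : x j ≠ p := fun he => hj (hx he)
          have hni : x j ∉ ⋂ k, closure (A p k) := by
            intro hmem
            refine hne ?_
            have hxj : x j ∈ ⋂ k, A p k := Set.mem_iInter.mpr fun k =>
              hAc p hi₀ k (Set.mem_iInter.mp hmem (k + 1))
            exact hAsub p hi₀ hxj
          rw [Set.mem_iInter, not_forall] at hni
          obtain ⟨k, hk⟩ := hni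
          exact ⟨k, fun _ => hk⟩
      choose g hg using hone
      set k := Finset.univ.sup g with hk
      have hk' : ∀ j, j ≠ i₀ → x j ∉ closure (A p k) := fun j hj hmem =>
        hg j hj (hclanti (Finset.le_sup (Finset.mem_univ j)) hmem)
      refine ⟨fun j => if j = i₀ then A p k else (closure (A p k))ᶜ, ?_, ?_, ?_⟩
      · intro j
        left
        simp only [Set.mem_iUnion]
        refine ⟨p, hi₀, k, ?_⟩
        by_cases hj : j = i₀ <;> simp [hj]
      · intro j
        by_cases hj : j = i₀
        · subst hj; simp only [if_pos rfl]; exact hAp p hi₀ k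
        · simp only [if_neg hj]; exact hk' j hj
      · have hj₁ : ∃ j₁ : Fin (n - 1 + 1), j₁ ≠ i₀ := by
          refine ⟨⟨if i₀.val = 0 then 1 else 0, ?_⟩, ?_⟩
          · split <;> omega
          · intro hcon
            have := congrArg Fin.val hcon
            simp only at this
            split at this <;> omega
        obtain ⟨j₁, hj₁⟩ := hj₁
        rw [Set.eq_empty_iff_forall_notMem]
        intro z hz
        have h1 : z ∈ A p k := by
          have := Set.mem_iInter.mp hz i₀; rwa [if_pos rfl] at this
        have h2 : z ∉ closure (A p k) := by
          have := Set.mem_iInter.mp hz j₁; rwa [if_neg hj₁] at this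
        exact h2 (subset_closure h1)
    · push_neg at hex
      have hgex : ∀ i, ∃ k, x i ∉ V k := by
        intro i
        have : x i ∉ ⋂ k, V k := fun hm => hex i (hVS hm)
        rw [Set.mem_iInter, not_forall] at this
        exact this
      choose g hg using hgex
      set k := Finset.univ.sup g with hkdef
      have hxk : ∀ i, x i ∉ V k := fun i hm =>
        hg i (hVanti (Finset.le_sup (Finset.mem_univ i)) hm)
      have hxcl : ∀ i, x i ∉ closure (V (k + 1)) := fun i hm => hxk i (hVc k hm)
      have hxL : ∀ i, x i ∈ (V (k + 1))ᶜ := fun i hm => hxcl i (subset_closure hm)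
      set y : Fin (n - 1 + 1) → ↥((V (k + 1))ᶜ) := fun i => ⟨x i, hxL i⟩ with hy
      have hyinj : Function.Injective y := fun a b hab => hx (congrArg Subtype.val hab)
      obtain ⟨W', hW'O, hW'mem, hW'empty⟩ := hOpt k y hyinj
      refine ⟨fun i => T k (W' i) ∩ (closure (V (k + 1)))ᶜ, ?_, ?_, ?_⟩
      · intro i
        right
        exact Set.mem_iUnion.mpr ⟨k, ⟨W' i, hW'O i, rfl⟩⟩
      · intro i
        refine ⟨?_, hxcl i⟩
        have := hW'mem i
        rw [← hTpre k (W' i) (hW'O i)] at this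
        exact this
      · rw [Set.eq_empty_iff_forall_notMem]
        intro z hz
        have hzc : z ∈ (V (k + 1))ᶜ := fun hm =>
          (Set.mem_iInter.mp hz 0).2 (subset_closure hm)
        have hzz : (⟨z, hzc⟩ : ↥((V (k + 1))ᶜ)) ∈ ⋂ i, W' i := by
          refine Set.mem_iInter.mpr fun i => ?_
          rw [← hTpre k (W' i) (hW'O i)]
          exact (Set.mem_iInter.mp hz i).1
        rw [hW'empty] at hzz
        exact hzz
end

section
/- If 𝒞 is a finite cover of the space KE consisting of closed sets, then the set X(𝒞) = ⋃_{C∈𝒞} {x ∈ [0,1] : for every s ∈ 𝕊, the point ⟨x,s⟩ of Y belongs to C} is comeager in [0,1]. -/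
open TopologicalSpace

/-- The split interval `𝕊 = ((0,1] × {0}) ∪ ([0,1) × {1})` with the lexicographic order
(a point `⟨x, false⟩` is `x⁻` and `⟨x, true⟩` is `x⁺`). -/
abbrev SplitInt : Type :=
  {q : Lex (ℝ × Bool) //
    ((ofLex q).2 = false ∧ (ofLex q).1 ∈ Set.Ioc (0 : ℝ) 1) ∨
    ((ofLex q).2 = true ∧ (ofLex q).1 ∈ Set.Ico (0 : ℝ) 1)}

/-- `Y = [0,1] ×_lex 𝕊`, the lexicographic product of `[0,1]` and the split interval. -/
abbrev YE : Type := Lex (UnitInt × SplitInt)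

/-- `X = [0,1] × (0,1] ⊆ ℝ²`, with its Euclidean (subspace) topology. -/
abbrev XE : Type := {p : ℝ × ℝ // p.1 ∈ Set.Icc (0 : ℝ) 1 ∧ p.2 ∈ Set.Ioc (0 : ℝ) 1}

/-- The underlying set of `KE` is the disjoint union `X ⊔ Y`. -/
abbrev KE : Type := XE ⊕ YE

/-- `U_n(z,a,b)` : the intersection with `X` of the open "polar rectangle"
`{⟨z + r·cos(π − πt), r·sin(π − πt)⟩ : 0 < r < 1/n, a < t < b}`. -/
noncomputable def Uset (n : ℕ) (z a b : ℝ) : Set XE :=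
  {p | ∃ r t : ℝ, 0 < r ∧ r < 1 / (n : ℝ) ∧ a < t ∧ t < b ∧
    (p : ℝ × ℝ).1 = z + r * Real.cos (Real.pi - Real.pi * t) ∧
    (p : ℝ × ℝ).2 = r * Real.sin (Real.pi - Real.pi * t)}

/-- The canonical (order-preserving) coordinate map of `Y` into `ℝ ×_lex (ℝ ×_lex Bool)`. -/
def cY (w : YE) : Lex (ℝ × Lex (ℝ × Bool)) :=
  toLex ((((ofLex w).1 : ℝ)), ((ofLex w).2 : Lex (ℝ × Bool)))

/-- A triple of coordinates, as a point of `ℝ ×_lex (ℝ ×_lex Bool)`. -/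
def pt (x y : ℝ) (b : Bool) : Lex (ℝ × Lex (ℝ × Bool)) :=
  toLex (x, toLex (y, b))

/-- `I(α,β)` : the set of points of `Y` lying strictly between `α` and `β`
(in the lexicographic order, read off through the coordinates). -/
def Iset (α β : Lex (ℝ × Lex (ℝ × Bool))) : Set YE :=
  {w | α < cY w ∧ cY w < β}

/-- The basic neighborhoods of points of `KE`:  a point of `X` has its usual Euclidean
neighborhoods taken inside `X`; a point `⟨x, y⁻⟩` of `Y` with `y ≠ 1` has neighborhoods
`U_n(x,a,y) ∪ I(⟨x,a⁻⟩, ⟨x,y⁺⟩)` for `0 < a < y`, `n ≥ 1`; a point `⟨x, y⁺⟩` with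
`y ≠ 0` has neighborhoods `U_n(x,y,b) ∪ I(⟨x,y⁻⟩, ⟨x,b⁺⟩)` for `y < b < 1`, `n ≥ 1`;
a point `⟨x, 0⁺⟩` has neighborhoods `U_n(x,0,b) ∪ I(⟨x−1/n,(1/2)⁻⟩, ⟨x,b⁺⟩)` for
`0 < b < 1`, `n ≥ 1`; and a point `⟨x, 1⁻⟩` has neighborhoods
`U_n(x,a,1) ∪ I(⟨x,a⁻⟩, ⟨x+1/n,(1/2)⁺⟩)` for `0 < a < 1`, `n ≥ 1`. -/
noncomputable def IsBasicNhd (p : KE) (B : Set KE) : Prop :=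
  (∃ q : XE, p = Sum.inl q ∧ ∃ V : Set XE, IsOpen V ∧ q ∈ V ∧ B = Sum.inl '' V) ∨
  (∃ w : YE, p = Sum.inr w ∧
    (let x : ℝ := ((ofLex w).1 : ℝ)
     let yr : ℝ := (ofLex ((ofLex w).2 : Lex (ℝ × Bool))).1
     let bb : Bool := (ofLex ((ofLex w).2 : Lex (ℝ × Bool))).2
     (bb = false ∧ yr ≠ 1 ∧ ∃ n : ℕ, 1 ≤ n ∧ ∃ a : ℝ, 0 < a ∧ a < yr ∧
        B = Sum.inl '' Uset n x a yr ∪ Sum.inr '' Iset (pt x a false) (pt x yr true)) ∨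
     (bb = true ∧ yr ≠ 0 ∧ ∃ n : ℕ, 1 ≤ n ∧ ∃ b : ℝ, yr < b ∧ b < 1 ∧
        B = Sum.inl '' Uset n x yr b ∪ Sum.inr '' Iset (pt x yr false) (pt x b true)) ∨
     (bb = true ∧ yr = 0 ∧ ∃ n : ℕ, 1 ≤ n ∧ ∃ b : ℝ, 0 < b ∧ b < 1 ∧
        B = Sum.inl '' Uset n x 0 b ∪
          Sum.inr '' Iset (pt (x - 1 / (n : ℝ)) (1 / 2) false) (pt x b true)) ∨
     (bb = false ∧ yr = 1 ∧ ∃ n : ℕ, 1 ≤ n ∧ ∃ a : ℝ, 0 < a ∧ a < 1 ∧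
        B = Sum.inl '' Uset n x a 1 ∪
          Sum.inr '' Iset (pt x a false) (pt (x + 1 / (n : ℝ)) (1 / 2) true))))

/-- The neighborhood filter of a point of `KE`, generated by its basic neighborhoods. -/
noncomputable def nhdKE (p : KE) : Filter KE :=
  ⨅ B ∈ {B : Set KE | IsBasicNhd p B}, Filter.principal B

/-- The topology on `KE` determined by the above neighborhood system: a set is open iff
it belongs to the neighborhood filter of each of its points. -/
noncomputable instance : TopologicalSpace KE :=
  TopologicalSpace.mkOfNhds nhdKE

/-!
If `x ∉ X(𝒞)`, every `C ∈ 𝒞` misses some point `⟨x, s⟩`, hence misses a basic neighbourhood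
of it, hence misses a wedge `U_n(x,a,b)` with rational `0 < a < b < 1`. For fixed `(n, a, b)`
the set of `x` whose wedge misses `C` is closed, so choosing parameters for every `C ∈ 𝒞`
covers the complement of `X(𝒞)` by countably many closed sets. Each has empty interior: a
point of `X` low enough above an interval lies in the wedge of some `x` in that interval, and
it lies in some `C ∈ 𝒞`.
-/

open Set Filter Topology Real

def sector (n : ℕ) (a b : ℝ) : Set (ℝ × ℝ) :=
  {q | ∃ r t : ℝ, 0 < r ∧ r < 1 / (n : ℝ) ∧ a < t ∧ t < b ∧
    q.1 = r * cos (π - π * t) ∧ q.2 = r * sin (π - π * t)}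

lemma mem_Uset_iff {n : ℕ} {z a b : ℝ} {p : XE} :
    p ∈ Uset n z a b ↔ ((p : ℝ × ℝ).1 - z, (p : ℝ × ℝ).2) ∈ sector n a b := by
  simp only [Uset, sector, mem_ofPred_eq, sub_eq_iff_eq_add']

lemma sector_eq_image_polarCoord_symm (n : ℕ) (a b : ℝ) :
    sector n a b = polarCoord.symm '' (Ioo 0 (1 / (n : ℝ)) ×ˢ Ioo (π - π * b) (π - π * a)) := by
  ext ⟨u, v⟩
  simp only [sector, mem_ofPred_eq, mem_image, Prod.exists, mem_prod, mem_Ioo,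
    polarCoord_symm_apply, Prod.mk.injEq]
  constructor
  · rintro ⟨r, t, hr, hrn, hat, htb, rfl, rfl⟩
    exact ⟨r, π - π * t, ⟨⟨hr, hrn⟩, by nlinarith [pi_pos], by nlinarith [pi_pos]⟩, rfl, rfl⟩
  · rintro ⟨r, θ, ⟨⟨hr, hrn⟩, hbθ, hθa⟩, rfl, rfl⟩
    have hθ : π - π * (1 - θ / π) = θ := by field_simp; ring
    refine ⟨r, 1 - θ / π, hr, hrn, ?_, ?_, by rw [hθ], by rw [hθ]⟩
    · rw [lt_sub_iff_add_lt, ← lt_sub_iff_add_lt', div_lt_iff₀ pi_pos]; linarith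
    · rw [sub_lt_comm, lt_div_iff₀ pi_pos]; linarith

lemma isOpen_sector (n : ℕ) {a b : ℝ} (ha : 0 ≤ a) (hb : b ≤ 1) : IsOpen (sector n a b) := by
  rw [sector_eq_image_polarCoord_symm]
  refine polarCoord.isOpen_image_symm_of_subset_target (isOpen_Ioo.prod isOpen_Ioo) ?_
  rintro ⟨r, θ⟩ ⟨⟨hr, -⟩, hbθ, hθa⟩
  refine ⟨hr, ?_, ?_⟩ <;> simp only at hbθ hθa ⊢ <;> nlinarith [pi_pos]

lemma isOpen_setOf_mem_Uset (n : ℕ) {a b : ℝ} (ha : 0 ≤ a) (hb : b ≤ 1) (p : XE) :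
    IsOpen {x : UnitInt | p ∈ Uset n x a b} := by
  simp only [mem_Uset_iff]
  exact (isOpen_sector n ha hb).preimage (by fun_prop)

lemma eventually_exists_mem_sector {n : ℕ} (hn : 0 < n) {a b : ℝ} (ha : 0 ≤ a) (hab : a < b)
    (hb : b ≤ 1) {ε : ℝ} (hε : 0 < ε) :
    ∀ᶠ h in 𝓝[>] 0, ∃ u, |u| < ε ∧ (u, h) ∈ sector n a b := by
  obtain ⟨t, hat, htb⟩ := exists_between hab
  have hs : 0 < sin (π - π * t) := sin_pos_of_pos_of_lt_pi (by nlinarith [pi_pos])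
    (by nlinarith [pi_pos])
  have hδ : 0 < sin (π - π * t) * min (1 / (n : ℝ)) ε := by positivity
  filter_upwards [Ioo_mem_nhdsGT hδ] with h ⟨h0, hδ⟩
  have hr : h / sin (π - π * t) < min (1 / (n : ℝ)) ε := by rwa [div_lt_iff₀' hs]
  refine ⟨h / sin (π - π * t) * cos (π - π * t), ?_, _, t, by positivity,
    hr.trans_le (min_le_left _ _), hat, htb, rfl, (div_mul_cancel₀ h hs.ne').symm⟩
  calc |h / sin (π - π * t) * cos (π - π * t)| ≤ h / sin (π - π * t) := by
        rw [abs_mul, abs_of_pos (by positivity : 0 < h / sin (π - π * t))]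
        exact mul_le_of_le_one_right (by positivity) (abs_cos_le_one _)
    _ < ε := hr.trans_le (min_le_right _ _)

lemma Uset_mono {n n' : ℕ} (hn : 0 < n) (hnn : n ≤ n') {z a a' b b' : ℝ}
    (haa : a ≤ a') (hbb : b' ≤ b) : Uset n' z a' b' ⊆ Uset n z a b := by
  rintro p ⟨r, t, hr, hrn, hat, htb, hp⟩
  have : 1 / (n' : ℝ) ≤ 1 / (n : ℝ) := by gcongr
  exact ⟨r, t, hr, hrn.trans_le this, haa.trans_lt hat, htb.trans_le hbb, hp⟩

/-- For `s = y⁻` the wedges at `x` with angles in `(y - δ, y)`, for `s = y⁺` those with angles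
in `(y, y + δ)`. -/
def sideWedge (x : ℝ) (s : SplitInt) (n : ℕ) (δ : ℝ) : Set XE :=
  if (ofLex s.1).2 then Uset n x (ofLex s.1).1 ((ofLex s.1).1 + δ)
  else Uset n x ((ofLex s.1).1 - δ) (ofLex s.1).1

lemma sideWedge_mono (x : ℝ) (s : SplitInt) {n n' : ℕ} (hn : 0 < n) (hnn : n ≤ n') {δ δ' : ℝ}
    (hδ : δ' ≤ δ) : sideWedge x s n' δ' ⊆ sideWedge x s n δ := by
  unfold sideWedge
  split_ifs
  · exact Uset_mono hn hnn le_rfl (by linarith)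
  · exact Uset_mono hn hnn (by linarith) le_rfl

lemma exists_sideWedge_subset_of_isBasicNhd {x : UnitInt} {s : SplitInt} {B : Set KE}
    (hB : IsBasicNhd (.inr (toLex (x, s))) B) :
    ∃ n, 0 < n ∧ ∃ δ > 0, .inl '' sideWedge x s n δ ⊆ B := by
  rcases hB with ⟨q, hq, -⟩ | ⟨w, hw, hB⟩
  · cases hq
  cases hw
  rcases hB with ⟨hb, -, n, hn, a, -, ha, rfl⟩ | ⟨hb, -, n, hn, b, hb', -, rfl⟩ |
      ⟨hb, hy, n, hn, b, hb', -, rfl⟩ | ⟨hb, hy, n, hn, a, -, ha, rfl⟩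
  all_goals simp only [ofLex_toLex] at *
  all_goals refine ⟨n, hn, ?_⟩
  · refine ⟨_, sub_pos.2 ha, ?_⟩
    simp only [sideWedge, hb, Bool.false_eq_true, if_false, sub_sub_cancel]
    exact subset_union_left
  · refine ⟨_, sub_pos.2 hb', ?_⟩
    simp only [sideWedge, hb, if_true, add_sub_cancel]
    exact subset_union_left
  · refine ⟨_, sub_pos.2 hb', ?_⟩
    simp only [sideWedge, hb, hy, if_true, add_sub_cancel]
    exact subset_union_left
  · refine ⟨_, sub_pos.2 ha, ?_⟩
    simp only [sideWedge, hb, hy, Bool.false_eq_true, if_false, sub_sub_cancel]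
    exact subset_union_left

lemma exists_sideWedge_subset_of_isOpen {O : Set KE} (hO : IsOpen O) {x : UnitInt}
    {s : SplitInt} (hxs : .inr (toLex (x, s)) ∈ O) :
    ∃ k : ℕ, .inl '' sideWedge x s (k + 1) (1 / (k + 1)) ⊆ O := by
  have hanti : Antitone fun k : ℕ => (.inl '' sideWedge x s (k + 1) (1 / (k + 1)) : Set KE) :=
    fun k k' hkk' => image_mono <| sideWedge_mono x s k.succ_pos (by omega) <|
      one_div_le_one_div_of_le (by positivity) (by exact_mod_cast Nat.succ_le_succ hkk')
  -- comparing `nhdKE` with an antitone sequence avoids proving that basic neighbourhoods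
  -- form a directed family
  have hle : ⨅ k : ℕ, 𝓟 (.inl '' sideWedge x s (k + 1) (1 / (k + 1))) ≤
      nhdKE (.inr (toLex (x, s))) := by
    refine le_iInf₂ fun B hB => ?_
    obtain ⟨n, hn, δ, hδ, hB⟩ := exists_sideWedge_subset_of_isBasicNhd hB
    obtain ⟨k, hnk, hkδ⟩ := ((eventually_ge_atTop n).and
      ((tendsto_one_div_add_atTop_nhds_zero_nat).eventually (gt_mem_nhds hδ))).exists
    exact iInf_le_of_le k <| principal_mono.2 <|
      (image_mono (sideWedge_mono x s hn (n' := k + 1) (by omega) hkδ.le)).trans hB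
  obtain ⟨k, -, hk⟩ := (hasBasis_iInf_principal hanti.directed_ge).mem_iff.1 (hle (hO _ hxs))
  exact ⟨k, hk⟩

lemma exists_rat_Uset_subset (n : ℕ) (z : ℝ) {a b : ℝ} (hn : 0 < n) (hab : a < b) (ha : a < 1)
    (hb : 0 < b) : ∃ a' b' : ℚ, 0 < a' ∧ a' < b' ∧ b' < 1 ∧ Uset n z a' b' ⊆ Uset n z a b := by
  obtain ⟨a', ha'₁, ha'₂⟩ := exists_rat_btwn (lt_min (max_lt hab hb) (max_lt ha one_pos))
  obtain ⟨b', hb'₁, hb'₂⟩ := exists_rat_btwn ha'₂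
  refine ⟨a', b', ?_, by exact_mod_cast hb'₁, ?_, Uset_mono hn le_rfl ?_ ?_⟩
  · exact_mod_cast (le_max_right a 0).trans_lt ha'₁
  · exact_mod_cast hb'₂.trans_le (min_le_right b 1)
  · exact (le_max_left a 0).trans ha'₁.le
  · exact hb'₂.le.trans (min_le_left b 1)

lemma exists_rat_Uset_subset_sideWedge (x : ℝ) (s : SplitInt) {n : ℕ} (hn : 0 < n) {δ : ℝ}
    (hδ : 0 < δ) : ∃ a b : ℚ, 0 < a ∧ a < b ∧ b < 1 ∧ Uset n x a b ⊆ sideWedge x s n δ := by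
  unfold sideWedge
  rcases s.2 with ⟨hb, hy₀, hy₁⟩ | ⟨hb, hy₀, hy₁⟩ <;>
    simp only [hb, Bool.false_eq_true, if_true, if_false]
  · exact exists_rat_Uset_subset n x hn (by linarith) (by linarith) hy₀
  · exact exists_rat_Uset_subset n x hn (by linarith) hy₁ (by linarith)

abbrev WedgeIdx : Type := {i : ℕ × ℚ × ℚ // 0 < i.1 ∧ 0 < i.2.1 ∧ i.2.1 < i.2.2 ∧ i.2.2 < 1}

def wedgeAvoid (C : Set KE) (i : WedgeIdx) : Set UnitInt :=
  {x | ∀ p ∈ Uset i.1.1 x i.1.2.1 i.1.2.2, .inl p ∉ C}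

lemma isClosed_wedgeAvoid (C : Set KE) (i : WedgeIdx) : IsClosed (wedgeAvoid C i) := by
  simp only [wedgeAvoid, ofPred_forall]
  exact isClosed_iInter fun p => isClosed_imp
    (isOpen_setOf_mem_Uset _ (by exact_mod_cast i.2.2.1.le) (by exact_mod_cast i.2.2.2.2.le) p)
    isClosed_const

lemma exists_mem_wedgeAvoid {C : Set KE} (hC : IsClosed C) {x : UnitInt} {s : SplitInt}
    (hxs : .inr (toLex (x, s)) ∉ C) : ∃ i : WedgeIdx, x ∈ wedgeAvoid C i := by
  obtain ⟨k, hk⟩ := exists_sideWedge_subset_of_isOpen hC.isOpen_compl hxs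
  obtain ⟨a, b, ha, hab, hb, hsub⟩ :=
    exists_rat_Uset_subset_sideWedge x s k.succ_pos (δ := 1 / (k + 1)) (by positivity)
  exact ⟨⟨(k + 1, a, b), k.succ_pos, ha, hab, hb⟩, fun p hp => hk ⟨p, hsub hp, rfl⟩⟩

lemma exists_ball_subset_of_isOpen_unitInt {U : Set UnitInt} (hU : IsOpen U)
    (hne : U.Nonempty) :
    ∃ z ε, 0 < ε ∧ Metric.ball z ε ⊆ Icc 0 1 ∧ Subtype.val ⁻¹' Metric.ball z ε ⊆ U := by
  obtain ⟨V, hV, rfl⟩ := isOpen_induced_iff.1 hU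
  obtain ⟨x₀, hx₀⟩ := hne
  have : x₀.1 ∈ closure (Ioo (0 : ℝ) 1) := by rw [closure_Ioo zero_ne_one]; exact x₀.2
  obtain ⟨z, hzV, hz⟩ := mem_closure_iff.1 this V hV hx₀
  obtain ⟨ε, hε, hball⟩ := Metric.isOpen_iff.1 (hV.inter isOpen_Ioo) z ⟨hzV, hz⟩
  exact ⟨z, ε, hε, hball.trans (inter_subset_right.trans Ioo_subset_Icc_self),
    fun x hx => (hball hx).1⟩

lemma interior_iInter_wedgeAvoid_eq_empty {ι : Type*} [Finite ι] {C : ι → Set KE}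
    (hcover : ∀ p : XE, ∃ i, .inl p ∈ C i) (f : ι → WedgeIdx) :
    interior (⋂ i, wedgeAvoid (C i) (f i)) = ∅ := by
  by_contra hne
  obtain ⟨z, ε, hε, hball, hU⟩ :=
    exists_ball_subset_of_isOpen_unitInt isOpen_interior (nonempty_iff_ne_empty.2 hne)
  have hev : ∀ᶠ h in 𝓝[>] (0 : ℝ), (0 < h ∧ h < 1) ∧
      ∀ i, ∃ u, |u| < ε ∧ (u, h) ∈ sector (f i).1.1 (f i).1.2.1 (f i).1.2.2 :=
    Filter.Eventually.and (Ioo_mem_nhdsGT one_pos) <| eventually_all.2 fun i =>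
      eventually_exists_mem_sector (f i).2.1 (by exact_mod_cast (f i).2.2.1.le)
        (by exact_mod_cast (f i).2.2.2.1) (by exact_mod_cast (f i).2.2.2.2.le) hε
  obtain ⟨h, ⟨h0, h1⟩, hsector⟩ := hev.exists
  obtain ⟨i, hpi⟩ := hcover ⟨(z, h), hball (Metric.mem_ball_self hε), h0, h1.le⟩
  obtain ⟨u, hu, hmem⟩ := hsector i
  have hzu : z - u ∈ Metric.ball z ε := by simpa [Real.dist_eq] using hu
  refine mem_iInter.1 (interior_subset (hU (a := ⟨z - u, hball hzu⟩) hzu)) i _ ?_ hpi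
  rwa [mem_Uset_iff, sub_sub_cancel]

/-- If `𝒞` is a finite cover of `KE` by closed sets, then the set
`X(𝒞) = ⋃_{C ∈ 𝒞} {x ∈ [0,1] : ∀ s ∈ 𝕊, ⟨x,s⟩ ∈ C}` is comeager in `[0,1]`. -/
theorem comeager_of_finite_closed_cover (𝒞 : Finset (Set KE))
    (hclosed : ∀ C ∈ 𝒞, IsClosed C)
    (hcover : (⋃ C ∈ 𝒞, C) = Set.univ) :
    (⋃ C ∈ 𝒞, {x : UnitInt | ∀ s : SplitInt, (Sum.inr (toLex (x, s)) : KE) ∈ C})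
      ∈ residual UnitInt := by
  set G := ⋃ C ∈ 𝒞, {x : UnitInt | ∀ s : SplitInt, (Sum.inr (toLex (x, s)) : KE) ∈ C}
  suffices IsMeagre Gᶜ by rwa [IsMeagre, compl_compl] at this
  have hbad : Gᶜ ⊆ ⋃ f : 𝒞 → WedgeIdx, ⋂ C : 𝒞, wedgeAvoid C (f C) := by
    intro x hx
    simp only [G, mem_compl_iff, mem_iUnion, mem_ofPred_eq, not_exists, not_forall] at hx
    choose f hf using fun C : 𝒞 =>
      (hx C C.2).elim fun s hs => exists_mem_wedgeAvoid (hclosed C C.2) hs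
    exact mem_iUnion.2 ⟨f, mem_iInter.2 hf⟩
  have hcover' : ∀ p : XE, ∃ C : 𝒞, .inl p ∈ (C : Set KE) := fun p => by
    obtain ⟨C, hC, hp⟩ := mem_iUnion₂.1 (hcover ▸ mem_univ (Sum.inl p : KE))
    exact ⟨⟨C, hC⟩, hp⟩
  refine IsMeagre.mono hbad (isMeagre_iUnion fun f => IsNowhereDense.isMeagre ?_)
  rw [(isClosed_iInter fun C => isClosed_wedgeAvoid _ _).isNowhereDense_iff]
  exact interior_iInter_wedgeAvoid_eq_empty hcover' f
end

section
/- Let K be a compact Hausdorff space. The following are equivalent: (A) K is an LΣ(≤ω)-space; (B) there is a countable cover 𝒞 of K consisting of closed subsets of K such that for every x ∈ K the intersection ⋂{C ∈ 𝒞 : x ∈ C} is metrizable. -/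
open TopologicalSpace

/-- A compact Hausdorff space `K` is an `LΣ(≤ω)`-space if and only if there is a
countable closed cover `𝒞` of `K` such that for every `x ∈ K` the intersection
`⋂ {C ∈ 𝒞 : x ∈ C}` is metrizable. -/
theorem isLSigmaLeOmega_iff_countable_closed_cover
    (K : Type*) [TopologicalSpace K] [CompactSpace K] [T2Space K] :
    IsLSigmaLeOmega K ↔
      ∃ 𝒞 : Set (Set K), 𝒞.Countable ∧ (∀ C ∈ 𝒞, IsClosed C) ∧ ⋃₀ 𝒞 = Set.univ ∧
        ∀ x : K, MetrizableSpace ↥(⋂ C ∈ {C ∈ 𝒞 | x ∈ C}, C) := by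
  constructor
  · -- Forward direction
    rintro ⟨M, _, hsep, hmetr, p, hunion, hcomp, husc, hmet⟩
    haveI : SecondCountableTopology M :=
      letI := metrizableSpaceMetric M
      UniformSpace.secondCountable_of_separable M
    obtain ⟨b, hb_count, -, hb_basis⟩ := exists_countable_basis M
    refine ⟨(fun B => closure (⋃ z ∈ B, p z)) '' b, hb_count.image _, ?_, ?_, ?_⟩
    · rintro C ⟨B, -, rfl⟩
      exact isClosed_closure
    · apply Set.eq_univ_of_forall
      intro x
      have hx : x ∈ ⋃ z, p z := by rw [hunion]; trivial
      obtain ⟨z, hz⟩ := Set.mem_iUnion.1 hx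
      have hzb : z ∈ ⋃₀ b := by rw [hb_basis.sUnion_eq]; trivial
      obtain ⟨B, hBb, hzB⟩ := hzb
      exact ⟨closure (⋃ w ∈ B, p w), ⟨B, hBb, rfl⟩,
        subset_closure (Set.mem_biUnion hzB hz)⟩
    · intro x
      have hx : x ∈ ⋃ z, p z := by rw [hunion]; trivial
      obtain ⟨z, hz⟩ := Set.mem_iUnion.1 hx
      have hsub : (⋂ C ∈ {C ∈ (fun B => closure (⋃ z ∈ B, p z)) '' b | x ∈ C}, C) ⊆ p z := by
        intro y hy
        by_contra hyp
        obtain ⟨U, V, hU, hV, hpzU, hyV, hUV⟩ :=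
          NormalSpace.normal (p z) {y} (hcomp z).isClosed isClosed_singleton
            (Set.disjoint_singleton_right.2 hyp)
        obtain ⟨B, hBb, hzB, hBsub⟩ :=
          hb_basis.exists_subset_of_mem_open (show z ∈ {w | p w ⊆ U} from hpzU) (husc U hU)
        have hxC : x ∈ closure (⋃ w ∈ B, p w) := subset_closure (Set.mem_biUnion hzB hz)
        have hyC : y ∈ closure (⋃ w ∈ B, p w) :=
          Set.mem_iInter₂.1 hy _ ⟨⟨B, hBb, rfl⟩, hxC⟩
        have hCU : closure (⋃ w ∈ B, p w) ⊆ closure U :=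
          closure_mono (Set.iUnion₂_subset fun w hw => hBsub hw)
        exact (hUV.closure_left hV).le_bot ⟨hCU hyC, hyV rfl⟩
      haveI := hmet z
      exact (Topology.IsEmbedding.inclusion hsub).metrizableSpace
  · -- Backward direction
    rintro ⟨𝒞, hcount, hclosed, hcover, hmet⟩
    classical
    obtain ⟨f, hf⟩ := (hcount.insert Set.univ).exists_eq_range ⟨Set.univ, Set.mem_insert _ _⟩
    have hfc : ∀ n, IsClosed (f n) := by
      intro n
      have hmem : f n ∈ insert Set.univ 𝒞 := by rw [hf]; exact Set.mem_range_self n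
      rcases hmem with h | h
      · rw [h]; exact isClosed_univ
      · exact hclosed _ h
    -- the set-valued map
    set q : (ℕ → Bool) → Set K := fun z => ⋂ n ∈ {n | z n = true}, f n with hq
    -- key computation of the values of `q`
    have key : ∀ (z : ℕ → Bool) (x : K), (∀ n, z n = true ↔ x ∈ f n) →
        q z = ⋂ C ∈ {C ∈ 𝒞 | x ∈ C}, C := by
      intro z x hzx
      ext y
      constructor
      · intro h
        refine Set.mem_iInter₂.2 ?_
        rintro C ⟨hC𝒞, hxC⟩
        have hCr : C ∈ Set.range f := by
          rw [← hf]; exact Set.mem_insert_of_mem _ hC𝒞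
        obtain ⟨n, rfl⟩ := hCr
        exact Set.mem_iInter₂.1 h n ((hzx n).2 hxC)
      · intro h
        refine Set.mem_iInter₂.2 fun n hn => ?_
        have hx : x ∈ f n := (hzx n).1 hn
        have hmem : f n ∈ insert Set.univ 𝒞 := by rw [hf]; exact Set.mem_range_self n
        rcases hmem with heq | hmem
        · rw [heq]; trivial
        · exact Set.mem_iInter₂.1 h _ ⟨hmem, hx⟩
    refine ⟨↥{z : ℕ → Bool | ∃ x : K, ∀ n, z n = true ↔ x ∈ f n}, inferInstance,
      inferInstance, inferInstance, fun z => q z.1, ?_, ?_, ?_, ?_⟩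
    · -- onto
      apply Set.eq_univ_of_forall
      intro x
      have hzx : ∀ n, (fun n => decide (x ∈ f n)) n = true ↔ x ∈ f n :=
        fun n => decide_eq_true_iff
      refine Set.mem_iUnion.2 ⟨⟨fun n => decide (x ∈ f n), x, hzx⟩, ?_⟩
      exact Set.mem_iInter₂.2 fun n hn => (hzx n).1 hn
    · -- compact-valued
      intro z
      exact ((isClosed_biInter fun n _ => hfc n)).isCompact
    · -- upper semicontinuous
      intro U hU
      rw [isOpen_iff_forall_mem_open]
      rintro ⟨z, x, hzx⟩ hzU
      have hzU' : q z ⊆ U := hzU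
      have hinter : Uᶜ ∩ ⋂ (i : {n // z n = true}), f i.1 = ∅ := by
        rw [Set.eq_empty_iff_forall_notMem]
        rintro y ⟨hy1, hy2⟩
        exact hy1 (hzU' (Set.mem_iInter₂.2 fun n hn => Set.mem_iInter.1 hy2 ⟨n, hn⟩))
      obtain ⟨u, hu⟩ := (hU.isClosed_compl.isCompact).elim_finite_subfamily_closed
        (fun i : {n // z n = true} => f i.1) (fun i => hfc i.1) hinter
      refine ⟨{w : ↥{z : ℕ → Bool | ∃ x : K, ∀ n, z n = true ↔ x ∈ f n} |
          ∀ i ∈ u, w.1 i.1 = true}, ?_, ?_, ?_⟩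
      · -- contained in `{w | q w ⊆ U}`
        intro w hw
        show q w.1 ⊆ U
        intro y hy
        by_contra hyU
        have hmem : y ∈ Uᶜ ∩ ⋂ i ∈ u, f i.1 :=
          ⟨hyU, Set.mem_iInter₂.2 fun i hi => Set.mem_iInter₂.1 hy i.1 (hw i hi)⟩
        rw [hu] at hmem
        exact hmem
      · -- open
        have heq : {w : ↥{z : ℕ → Bool | ∃ x : K, ∀ n, z n = true ↔ x ∈ f n} |
            ∀ i ∈ u, w.1 i.1 = true} = ⋂ i ∈ u,
            {w : ↥{z : ℕ → Bool | ∃ x : K, ∀ n, z n = true ↔ x ∈ f n} | w.1 i.1 = true} := by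
          ext w
          simp [Set.mem_iInter₂]
        rw [heq]
        refine isOpen_biInter_finset fun i _ => ?_
        have hcont : Continuous fun w : ↥{z : ℕ → Bool | ∃ x : K, ∀ n, z n = true ↔ x ∈ f n} =>
            w.1 i.1 := (continuous_apply i.1).comp continuous_subtype_val
        exact (isOpen_discrete {true}).preimage hcont
      · -- contains the point
        exact fun i _ => i.2
    · -- metrizable values
      rintro ⟨z, x, hzx⟩
      show MetrizableSpace ↥(q z)
      rw [key z x hzx]
      exact hmet x
end

section
/- Let K be a compact Hausdorff space. Then K is a KLΣ(≤ω)-space if and only if there is a family {C_s : s ∈ 2^(<ω)} of closed subsets of K, indexed by finite binary sequences, satisfying: (i) C_∅ = K; (ii) C_s = C_{s⌢0} ∪ C_{s⌢1} for every s ∈ 2^(<ω); (iii) for every σ ∈ 2^ω the set ⋂_{n∈ℕ} C_{σ|n} is metrizable. -/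
/-!
Every compact metrizable space is a continuous image of the Cantor set `2^ω`, so the parameter
space of a `KLΣ(≤ω)`-structure may be taken to be `2^ω` itself. Given such a map `p` on `2^ω`,
`C_s` is the closure of the union of `p τ` over the cylinder of `s`; upper semicontinuity and
the Hausdorff property put the intersection along a branch `σ` inside `p σ`. Conversely, a tree
`C` yields the map `σ ↦ ⋂ n, C_{σ|n}`, which is onto by following a branch through each point
and upper semicontinuous because in a compact space a decreasing sequence of closed sets enters
every neighbourhood of its intersection.
-/

open TopologicalSpace

open Set Topology

structure IsMetrizableUSCCover {M X : Type*} [TopologicalSpace M] [TopologicalSpace X]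
    (p : M → Set X) : Prop where
  iUnion_eq : ⋃ z, p z = univ
  isCompact : ∀ z, IsCompact (p z)
  isOpen_setOf_subset : ∀ U : Set X, IsOpen U → IsOpen {z | p z ⊆ U}
  metrizableSpace : ∀ z, MetrizableSpace (p z)

theorem metrizableSpace_of_subset {X : Type*} [TopologicalSpace X] {S T : Set X}
    (h : S ⊆ T) [MetrizableSpace T] : MetrizableSpace S :=
  (Topology.IsEmbedding.inclusion h).metrizableSpace

section Cover

variable {M N X : Type*} [TopologicalSpace M] [TopologicalSpace N] [TopologicalSpace X]

theorem IsMetrizableUSCCover.comp {p : M → Set X} (hp : IsMetrizableUSCCover p) {f : N → M}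
    (hf : Continuous f) (hsurj : Function.Surjective f) : IsMetrizableUSCCover (p ∘ f) where
  iUnion_eq := by rw [← hp.iUnion_eq, ← hsurj.iUnion_comp p]; rfl
  isCompact z := hp.isCompact (f z)
  isOpen_setOf_subset U hU := (hp.isOpen_setOf_subset U hU).preimage hf
  metrizableSpace z := hp.metrizableSpace (f z)

theorem isMetrizableUSCCover_empty [IsEmpty X] : IsMetrizableUSCCover fun _ : M => (∅ : Set X) where
  iUnion_eq := Subsingleton.elim _ _
  isCompact _ := isCompact_empty
  isOpen_setOf_subset _ _ := by simp only [empty_subset, ofPred_true, isOpen_univ]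
  metrizableSpace _ := inferInstance

theorem isKLSigmaLeOmega_iff_exists_isMetrizableUSCCover :
    IsKLSigmaLeOmega X ↔ ∃ p : (ℕ → Bool) → Set X, IsMetrizableUSCCover p := by
  constructor
  · rintro ⟨M, _, _, _, p, honto, hcomp, husc, hmet⟩
    have hp : IsMetrizableUSCCover p := ⟨honto, hcomp, husc, hmet⟩
    rcases isEmpty_or_nonempty M with hM | hM
    · have : IsEmpty X := by
        rw [← univ_eq_empty_iff, ← honto, iUnion_of_empty]
      exact ⟨_, isMetrizableUSCCover_empty⟩
    · let _ : MetricSpace M := metrizableSpaceMetric M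
      obtain ⟨f, hf, hsurj⟩ := exists_nat_bool_continuous_surjective_of_compact M
      exact ⟨p ∘ f, hp.comp hf hsurj⟩
  · rintro ⟨p, hp⟩
    exact ⟨ℕ → Bool, inferInstance, inferInstance, inferInstance, p,
      hp.iUnion_eq, hp.isCompact, hp.isOpen_setOf_subset, hp.metrizableSpace⟩

end Cover

section Prefix

variable {α : Type*}

/-- The initial segment `σ|n`. -/
def seqPrefix (σ : ℕ → α) (n : ℕ) : List α :=
  List.ofFn fun i : Fin n => σ i

@[simp]
theorem length_seqPrefix (σ : ℕ → α) (n : ℕ) : (seqPrefix σ n).length = n :=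
  List.length_ofFn

theorem seqPrefix_succ (σ : ℕ → α) (n : ℕ) : seqPrefix σ (n + 1) = seqPrefix σ n ++ [σ n] := by
  rw [seqPrefix, seqPrefix, List.ofFn_succ', List.concat_eq_append]
  rfl

theorem seqPrefix_eq_iff_mem_cylinder {σ τ : ℕ → α} {n : ℕ} :
    seqPrefix τ n = seqPrefix σ n ↔ τ ∈ PiNat.cylinder σ n := by
  simp only [seqPrefix, List.ofFn_inj, funext_iff, Fin.forall_iff, PiNat.mem_cylinder_iff]

theorem iInter_cylinder (σ : ℕ → α) : ⋂ n, PiNat.cylinder σ n = {σ} := by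
  refine Subset.antisymm (fun τ hτ => ?_) fun τ hτ => ?_
  · exact funext fun i => mem_iInter.1 hτ (i + 1) i i.lt_add_one
  · rw [mem_singleton_iff.1 hτ]
    exact mem_iInter.2 (PiNat.self_mem_cylinder σ)

theorem exists_forall_seqPrefix {P : List α → Prop} (hnil : P [])
    (hstep : ∀ s, P s → ∃ a, P (s ++ [a])) : ∃ σ : ℕ → α, ∀ n, P (seqPrefix σ n) := by
  have : Nonempty α := (hstep [] hnil).nonempty
  choose! next hnext using hstep
  let g : ℕ → List α := fun n => Nat.rec [] (fun _ s => s ++ [next s]) n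
  have hg : ∀ n, P (g n) := fun n => Nat.rec hnil (fun _ ih => hnext _ ih) n
  refine ⟨fun n => next (g n), fun n => ?_⟩
  suffices seqPrefix (fun n => next (g n)) n = g n from this ▸ hg n
  induction n with
  | zero => rfl
  | succ n ih => rw [seqPrefix_succ, ih]

theorem antitone_seqPrefix {X : Type*} {C : List α → Set X} (hC : ∀ s a, C (s ++ [a]) ⊆ C s)
    (σ : ℕ → α) : Antitone fun n => C (seqPrefix σ n) :=
  antitone_nat_of_succ_le fun n => by
    simp only [seqPrefix_succ]
    exact hC _ _

def listCylinder (s : List α) : Set (ℕ → α) :=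
  {τ | seqPrefix τ s.length = s}

theorem listCylinder_nil : listCylinder ([] : List α) = univ :=
  eq_univ_of_forall fun _ => rfl

theorem listCylinder_seqPrefix (σ : ℕ → α) (n : ℕ) :
    listCylinder (seqPrefix σ n) = PiNat.cylinder σ n := by
  ext τ
  change seqPrefix τ _ = _ ↔ _
  rw [length_seqPrefix, seqPrefix_eq_iff_mem_cylinder]

theorem mem_listCylinder_append_singleton {s : List α} {a : α} {τ : ℕ → α} :
    τ ∈ listCylinder (s ++ [a]) ↔ τ ∈ listCylinder s ∧ τ s.length = a := by
  simp only [listCylinder, mem_ofPred_eq, List.length_append, List.length_singleton,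
    seqPrefix_succ]
  constructor
  · intro h
    obtain ⟨hs, ha⟩ := List.append_inj h (length_seqPrefix τ _)
    exact ⟨hs, List.singleton_inj.1 ha⟩
  · rintro ⟨hs, rfl⟩
    rw [hs]

theorem listCylinder_eq_union (s : List Bool) :
    listCylinder s = listCylinder (s ++ [false]) ∪ listCylinder (s ++ [true]) := by
  ext τ
  simp only [mem_union, mem_listCylinder_append_singleton]
  cases τ s.length <;> simp

end Prefix

section Forward

variable {M X : Type*} [TopologicalSpace M] [TopologicalSpace X]

theorem iInter_closure_biUnion_subset [CompactSpace M] [T2Space X] {p : M → Set X}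
    (husc : ∀ U : Set X, IsOpen U → IsOpen {z | p z ⊆ U}) {G : ℕ → Set M} (hG : Antitone G)
    (hGc : ∀ n, IsClosed (G n)) {z : M} (hz : ⋂ n, G n ⊆ {z}) (hpz : IsCompact (p z)) :
    ⋂ n, closure (⋃ w ∈ G n, p w) ⊆ p z := by
  intro x hx
  by_contra hxz
  obtain ⟨U, V, hU, hV, hzU, hxV, hUV⟩ := SeparatedNhds.of_isCompact_isCompact hpz
    isCompact_singleton (disjoint_singleton_right.2 hxz)
  have hzU' : ∀ w ∈ ⋂ n, G n, {w | p w ⊆ U} ∈ 𝓝 w := fun w hw => by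
    obtain rfl := mem_singleton_iff.1 (hz hw)
    exact (husc U hU).mem_nhds hzU
  obtain ⟨N, hN⟩ := exists_subset_nhds_of_isCompact' hG.directed_ge
    (fun n => (hGc n).isCompact) hGc hzU'
  have hNU : ⋃ w ∈ G N, p w ⊆ U := iUnion₂_subset fun w hw => hN hw
  have hxU : x ∈ closure U := closure_mono hNU (mem_iInter.1 hx N)
  exact disjoint_left.1 (hUV.closure_left hV) hxU (hxV rfl)

variable {α : Type*}

def closureTree (p : (ℕ → α) → Set X) (s : List α) : Set X :=
  closure (⋃ τ ∈ listCylinder s, p τ)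

theorem closureTree_nil {p : (ℕ → α) → Set X} (hp : ⋃ τ, p τ = univ) :
    closureTree p [] = univ := by
  rw [closureTree, listCylinder_nil, biUnion_univ, hp, closure_univ]

theorem closureTree_eq_union (p : (ℕ → Bool) → Set X) (s : List Bool) :
    closureTree p s = closureTree p (s ++ [false]) ∪ closureTree p (s ++ [true]) := by
  rw [closureTree, closureTree, closureTree, ← closure_union, ← biUnion_union,
    ← listCylinder_eq_union]

theorem iInter_closureTree_seqPrefix_subset [T2Space X] {p : (ℕ → Bool) → Set X}
    (hp : IsMetrizableUSCCover p) (σ : ℕ → Bool) :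
    ⋂ n, closureTree p (seqPrefix σ n) ⊆ p σ := by
  simp only [closureTree, listCylinder_seqPrefix]
  refine iInter_closure_biUnion_subset hp.isOpen_setOf_subset
    (fun _ _ h => PiNat.cylinder_anti σ h) (fun n => ?_) (iInter_cylinder σ).subset
    (hp.isCompact σ)
  rw [PiNat.cylinder_eq_pi]
  exact isClosed_set_pi fun _ _ => isClosed_singleton

end Forward

theorem isMetrizableUSCCover_iInter_seqPrefix {X : Type*} [TopologicalSpace X] [CompactSpace X]
    {C : List Bool → Set X} (hclosed : ∀ s, IsClosed (C s)) (hnil : C [] = univ)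
    (hsplit : ∀ s, C s = C (s ++ [false]) ∪ C (s ++ [true]))
    (hmet : ∀ σ : ℕ → Bool, MetrizableSpace ↥(⋂ n, C (seqPrefix σ n))) :
    IsMetrizableUSCCover fun σ : ℕ → Bool => ⋂ n, C (seqPrefix σ n) where
  iUnion_eq := by
    refine eq_univ_of_forall fun x => mem_iUnion.2 ?_
    obtain ⟨σ, hσ⟩ := exists_forall_seqPrefix (P := fun s => x ∈ C s) (hnil ▸ mem_univ x)
      fun s hs => by rw [hsplit s] at hs; exact hs.elim (⟨false, ·⟩) (⟨true, ·⟩)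
    exact ⟨σ, mem_iInter.2 hσ⟩
  isCompact _ := (isClosed_iInter fun _ => hclosed _).isCompact
  isOpen_setOf_subset U hU := by
    refine isOpen_iff_forall_mem_open.2 fun σ hσ => ?_
    have hanti := antitone_seqPrefix (C := C) (fun s b => by
      rw [hsplit s]; cases b; exacts [subset_union_left, subset_union_right]) σ
    obtain ⟨N, hN⟩ := exists_subset_nhds_of_isCompact' hanti.directed_ge
      (fun _ => (hclosed _).isCompact) (fun _ => hclosed _) fun y hy => hU.mem_nhds (hσ hy)
    refine ⟨PiNat.cylinder σ N, fun τ hτ => ?_, PiNat.isOpen_cylinder _ σ N,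
      PiNat.self_mem_cylinder σ N⟩
    rw [← seqPrefix_eq_iff_mem_cylinder.2 hτ] at hN
    exact (iInter_subset _ N).trans hN
  metrizableSpace := hmet

/-- A compact Hausdorff space `K` is a `KLΣ(≤ω)`-space if and only if there is a family
`{C_s : s ∈ 2^{<ω}}` of closed subsets of `K` (indexed by finite binary sequences,
modelled as `List Bool`) with `C_∅ = K`, `C_s = C_{s⌢0} ∪ C_{s⌢1}` for all `s`, and
`⋂_n C_{σ|n}` metrizable for every `σ ∈ 2^ω`. -/
theorem isKLSigmaLeOmega_iff_tree_of_closed_sets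
    (K : Type*) [TopologicalSpace K] [CompactSpace K] [T2Space K] :
    IsKLSigmaLeOmega K ↔
      ∃ C : List Bool → Set K,
        (∀ s, IsClosed (C s)) ∧
        C [] = Set.univ ∧
        (∀ s : List Bool, C s = C (s ++ [false]) ∪ C (s ++ [true])) ∧
        ∀ σ : ℕ → Bool,
          MetrizableSpace ↥(⋂ n : ℕ, C (List.ofFn fun i : Fin n => σ i)) := by
  rw [isKLSigmaLeOmega_iff_exists_isMetrizableUSCCover]
  constructor
  · rintro ⟨p, hp⟩
    refine ⟨closureTree p, fun _ => isClosed_closure, closureTree_nil hp.iUnion_eq,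
      closureTree_eq_union p, fun σ => ?_⟩
    have := hp.metrizableSpace σ
    exact metrizableSpace_of_subset (iInter_closureTree_seqPrefix_subset hp σ)
  · rintro ⟨C, hclosed, hnil, hsplit, hmet⟩
    exact ⟨_, isMetrizableUSCCover_iInter_seqPrefix hclosed hnil hsplit hmet⟩
end

section
/- Let K be a compact Hausdorff space. Then K is a KLΣ(≤ω)-space if and only if there exist a compact metrizable space M and a closed subspace F of K × M such that π₁(F) = K and π₂⁻¹(y) ∩ F is metrizable for every y ∈ M, where π₁ : K × M → K and π₂ : K × M → M are the coordinate projections. -/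
open TopologicalSpace

open TopologicalSpace

section Aux

variable {K M : Type*} [TopologicalSpace K] [TopologicalSpace M]

omit [TopologicalSpace K] [TopologicalSpace M] in
lemma mem_slice {F : Set (K × M)} {y : M} (q : ↥(Prod.snd ⁻¹' {y} ∩ F)) :
    ((q : K × M).1, y) ∈ F := by
  obtain ⟨⟨x, z⟩, hz, hF⟩ := q
  obtain rfl : z = y := hz
  exact hF

/-- The fiber `π₂⁻¹ y ∩ F` is homeomorphic to the slice `{x | (x, y) ∈ F}`. -/
def fiberHomeo (F : Set (K × M)) (y : M) :
    ↥(Prod.snd ⁻¹' {y} ∩ F) ≃ₜ ↥{x : K | (x, y) ∈ F} where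
  toFun q := ⟨q.1.1, mem_slice q⟩
  invFun x := ⟨(x.1, y), ⟨rfl, x.2⟩⟩
  left_inv q := by
    apply Subtype.ext
    have h2 : q.1.2 = y := q.2.1
    exact Prod.ext rfl h2.symm
  right_inv x := rfl
  continuous_toFun := Continuous.subtype_mk (continuous_fst.comp continuous_subtype_val) _
  continuous_invFun := Continuous.subtype_mk
    ((continuous_subtype_val.prodMk continuous_const)) _

end Aux

/-- A compact Hausdorff space `K` is a `KLΣ(≤ω)`-space if and only if there exist a
compact metrizable space `M` and a closed subspace `F ⊆ K × M` such that `π₁(F) = K`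
and `π₂⁻¹(y) ∩ F` is metrizable for every `y ∈ M`, where `π₁, π₂` are the coordinate
projections. -/
theorem isKLSigmaLeOmega_iff_closed_subset_of_prod
    (K : Type*) [TopologicalSpace K] [CompactSpace K] [T2Space K] :
    IsKLSigmaLeOmega K ↔
      ∃ (M : Type) (_ : TopologicalSpace M), CompactSpace M ∧ MetrizableSpace M ∧
        ∃ F : Set (K × M), IsClosed F ∧ Prod.fst '' F = Set.univ ∧
          ∀ y : M, MetrizableSpace ↥(Prod.snd ⁻¹' {y} ∩ F) := by
  constructor
  · rintro ⟨M, tM, hcM, hmM, p, hunion, hcomp, husc, hmet⟩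
    refine ⟨M, tM, hcM, hmM, {q : K × M | q.1 ∈ p q.2}, ?_, ?_, ?_⟩
    · rw [← isOpen_compl_iff, isOpen_iff_forall_mem_open]
      rintro ⟨x, z⟩ hxz
      simp only [Set.mem_compl_iff, Set.mem_setOf_eq] at hxz
      obtain ⟨U, V, hU, hV, hxU, hpV, hUV⟩ :=
        SeparatedNhds.of_isCompact_isCompact_isClosed (isCompact_singleton (x := x))
          (hcomp z) ((hcomp z).isClosed) (by simpa using hxz)
      refine ⟨U ×ˢ {z' | p z' ⊆ V}, ?_, (hU.prod (husc V hV)), ⟨by simpa using hxU, hpV⟩⟩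
      rintro ⟨x', z'⟩ ⟨hx', hz'⟩
      simp only [Set.mem_compl_iff, Set.mem_setOf_eq]
      intro hmem
      exact (Set.disjoint_left.mp hUV hx') (hz' hmem)
    · ext x
      simp only [Set.mem_image, Set.mem_univ, iff_true]
      have : x ∈ ⋃ z, p z := hunion ▸ Set.mem_univ x
      obtain ⟨z, hz⟩ := Set.mem_iUnion.mp this
      exact ⟨(x, z), hz, rfl⟩
    · intro y
      have h := (fiberHomeo {q : K × M | q.1 ∈ p q.2} y)
      have : MetrizableSpace ↥{x : K | (x, y) ∈ {q : K × M | q.1 ∈ p q.2}} := by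
        have : {x : K | (x, y) ∈ {q : K × M | q.1 ∈ p q.2}} = p y := rfl
        rw [this]; exact hmet y
      exact h.isEmbedding.metrizableSpace
  · rintro ⟨M, tM, hcM, hmM, F, hFcl, hFonto, hFmet⟩
    haveI : T2Space M := @t2Space_of_metrizableSpace M tM hmM
    refine ⟨M, tM, hcM, hmM, fun z => {x : K | (x, z) ∈ F}, ?_, ?_, ?_, ?_⟩
    · ext x
      simp only [Set.mem_iUnion, Set.mem_setOf_eq, Set.mem_univ, iff_true]
      have : x ∈ Prod.fst '' F := hFonto ▸ Set.mem_univ x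
      obtain ⟨q, hq, hq1⟩ := this
      refine ⟨q.2, ?_⟩
      show (x, q.2) ∈ F
      rw [← hq1]
      exact hq
    · intro z
      have hcl : IsClosed {x : K | (x, z) ∈ F} :=
        hFcl.preimage (continuous_id.prodMk continuous_const)
      exact hcl.isCompact
    · intro U hU
      rw [← isClosed_compl_iff]
      have hC : IsClosed (F ∩ Uᶜ ×ˢ (Set.univ : Set M)) :=
        hFcl.inter (hU.isClosed_compl.prod isClosed_univ)
      have himg : IsClosed (Prod.snd '' (F ∩ Uᶜ ×ˢ (Set.univ : Set M))) :=
        (hC.isCompact.image continuous_snd).isClosed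
      convert himg using 1
      ext z
      simp only [Set.mem_compl_iff, Set.mem_setOf_eq, Set.mem_image, Set.mem_inter_iff,
        Set.mem_prod, Set.mem_univ, and_true, not_forall]
      constructor
      · rintro h
        rw [Set.not_subset] at h
        obtain ⟨x, hx, hxU⟩ := h
        exact ⟨(x, z), ⟨hx, hxU⟩, rfl⟩
      · rintro ⟨⟨x, z'⟩, ⟨hmem, hxU⟩, rfl⟩
        rw [Set.not_subset]
        exact ⟨x, hmem, hxU⟩
    · intro z
      haveI := hFmet z
      exact (fiberHomeo F z).symm.isEmbedding.metrizableSpace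
end

section
/- The closure KA of Y = {χ_{D(p)} : p ∈ ℚ²} in the Cantor cube {0,1}^(ℝ²) contains Y ∪ {χ_B : B ∈ ℬ} ∪ {χ_∅}; in particular, for every a ∈ ℝ², θ ∈ ℝ and i ∈ {0,1,2}, the characteristic function χ_{L_i(a,θ)} is a limit of characteristic functions of open unit disks with rational centers in the product topology of {0,1}^(ℝ²), and so is the constant zero function χ_∅. -/
open TopologicalSpace

/-- `L₀(a,θ)` : the open unit disk centered at `a` together with the open half of its
circumference running (strictly) from angle `θ` to angle `θ + π`. -/
noncomputable def L0 (a : ℝ × ℝ) (θ : ℝ) : Set (ℝ × ℝ) :=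
  diskD a ∪
    {x | ∃ φ : ℝ, θ < φ ∧ φ < θ + Real.pi ∧
      x = (a.1 + Real.cos φ, a.2 + Real.sin φ)}

/-- `L₁(a,θ)` : as `L₀(a,θ)` but including the endpoint at angle `θ + π`. -/
noncomputable def L1 (a : ℝ × ℝ) (θ : ℝ) : Set (ℝ × ℝ) :=
  diskD a ∪
    {x | ∃ φ : ℝ, θ < φ ∧ φ ≤ θ + Real.pi ∧
      x = (a.1 + Real.cos φ, a.2 + Real.sin φ)}

/-- `L₂(a,θ)` : as `L₀(a,θ)` but including the endpoint at angle `θ`. -/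
noncomputable def L2 (a : ℝ × ℝ) (θ : ℝ) : Set (ℝ × ℝ) :=
  diskD a ∪
    {x | ∃ φ : ℝ, θ ≤ φ ∧ φ < θ + Real.pi ∧
      x = (a.1 + Real.cos φ, a.2 + Real.sin φ)}

/-- The family `ℬ = {L_i(a,θ) : i ∈ {0,1,2}, a ∈ ℝ², θ ∈ ℝ}`. -/
noncomputable def BB : Set (Set (ℝ × ℝ)) :=
  {B | ∃ (a : ℝ × ℝ) (θ : ℝ), B = L0 a θ ∨ B = L1 a θ ∨ B = L2 a θ}

/-!
A basic neighbourhood of a point of the Cantor cube constrains only finitely many coordinates, so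
`χ_B ∈ KA` as soon as, for every finite `F`, some unit disk with rational center meets `F` exactly
in `F ∩ B`. Strict inequalities survive small moves of the center, so it suffices to find a real
center whose unit circle has `F ∩ B` strictly inside and `F \ B` strictly outside.

For `B = L_i(a,θ)`, push the center off `a` by a small `ε` along the left normal of the direction
`α`: interior points stay inside, exterior points stay outside, and the boundary point
`a + (cos φ, sin φ)` ends up inside exactly when `sin (φ - α) > 0`. The choice `α = θ` produces
`L₀`; taking `α` slightly above (below) `θ`, depending on `F`, also captures the endpoint at
`θ + π` (at `θ`), giving `L₁` (`L₂`). For `χ_∅` a center far from `F` works.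
-/

open Real Set Filter Topology

lemma sin_pos_iff_of_neg_pi_lt_of_lt_two_pi {t : ℝ} (h₁ : -π < t) (h₂ : t < 2 * π) :
    0 < sin t ↔ 0 < t ∧ t < π := by
  refine ⟨fun h => ⟨?_, ?_⟩, fun h => sin_pos_of_pos_of_lt_pi h.1 h.2⟩
  · by_contra! ht
    linarith [sin_nonpos_of_nonpos_of_neg_pi_le ht h₁.le]
  · by_contra! ht
    have := sin_nonpos_of_nonpos_of_neg_pi_le (x := t - 2 * π) (by linarith) (by linarith)
    rw [sin_sub_two_pi] at this
    linarith

lemma mem_Ioo_iff_sin_pos {θ φ : ℝ} (hφ : φ ∈ Ico θ (θ + 2 * π)) :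
    φ ∈ Ioo θ (θ + π) ↔ 0 < sin (φ - θ) := by
  rw [sin_pos_iff_of_neg_pi_lt_of_lt_two_pi (by linarith [hφ.1, pi_pos]) (by linarith [hφ.2]),
    mem_Ioo]
  constructor <;> rintro ⟨h₁, h₂⟩ <;> constructor <;> linarith

lemma eventually_mem_Ioc_iff_sin_pos {θ φ : ℝ} (hφ : φ ∈ Ico θ (θ + 2 * π)) :
    ∀ᶠ α in 𝓝[>] θ, (φ ∈ Ioc θ (θ + π) ↔ 0 < sin (φ - α)) := by
  have h₁ : ∀ᶠ α in 𝓝[>] θ, θ < φ → α < φ := eventually_imp_distrib_left.2 fun h =>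
    eventually_nhdsWithin_of_eventually_nhds (eventually_lt_nhds h)
  have h₂ : ∀ᶠ α in 𝓝[>] θ, θ + π < φ → α < φ - π := eventually_imp_distrib_left.2 fun h =>
    eventually_nhdsWithin_of_eventually_nhds (eventually_lt_nhds (by linarith))
  filter_upwards [Ioo_mem_nhdsGT (by linarith [pi_pos] : θ < θ + π), h₁, h₂]
    with α ⟨hθα, hαπ⟩ h₁ h₂
  rw [sin_pos_iff_of_neg_pi_lt_of_lt_two_pi (by linarith [hφ.1]) (by linarith [hφ.2]), mem_Ioc]
  constructor
  · rintro ⟨hlo, hhi⟩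
    exact ⟨by linarith [h₁ hlo], by linarith⟩
  · rintro ⟨hlo, hhi⟩
    refine ⟨by linarith, not_lt.1 fun h => ?_⟩
    linarith [h₂ h]

lemma eventually_mem_Ico_iff_sin_pos {θ φ : ℝ} (hφ : φ ∈ Ico θ (θ + 2 * π)) :
    ∀ᶠ α in 𝓝[<] θ, (φ ∈ Ico θ (θ + π) ↔ 0 < sin (φ - α)) := by
  have h₁ : ∀ᶠ α in 𝓝[<] θ, φ - 2 * π < α :=
    eventually_nhdsWithin_of_eventually_nhds (eventually_gt_nhds (by linarith [hφ.2]))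
  have h₂ : ∀ᶠ α in 𝓝[<] θ, φ < θ + π → φ - π < α := eventually_imp_distrib_left.2 fun h =>
    eventually_nhdsWithin_of_eventually_nhds (eventually_gt_nhds (by linarith))
  filter_upwards [self_mem_nhdsWithin, h₁, h₂] with α (hαθ : α < θ) h₁ h₂
  rw [sin_pos_iff_of_neg_pi_lt_of_lt_two_pi (by linarith [hφ.1, pi_pos]) (by linarith), mem_Ico]
  constructor
  · rintro ⟨hlo, hhi⟩
    exact ⟨by linarith, by linarith [h₂ hhi]⟩
  · rintro ⟨-, hhi⟩
    exact ⟨hφ.1, by linarith⟩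

theorem mem_closure_of_forall_finset_exists_eqOn {X Y : Type*} [TopologicalSpace Y]
    [DiscreteTopology Y] {S : Set (X → Y)} {f : X → Y}
    (h : ∀ F : Finset X, ∃ g ∈ S, EqOn g f F) : f ∈ closure S := by
  refine mem_closure_iff_nhds.2 fun U hU => ?_
  rw [nhds_pi, Filter.mem_pi] at hU
  obtain ⟨I, hI, t, ht, hsub⟩ := hU
  obtain ⟨g, hgS, hg⟩ := h hI.toFinset
  refine ⟨g, hsub fun x hx => ?_, hgS⟩
  rw [hg (hI.mem_toFinset.2 hx)]
  exact mem_of_mem_nhds (ht x)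

def sqDist (x c : ℝ × ℝ) : ℝ := (x.1 - c.1) ^ 2 + (x.2 - c.2) ^ 2

def StrictlySeparates (c : ℝ × ℝ) (B : Set (ℝ × ℝ)) (F : Finset (ℝ × ℝ)) : Prop :=
  ∀ x ∈ F, (x ∈ B → sqDist x c < 1) ∧ (x ∉ B → 1 < sqDist x c)

lemma isOpen_setOf_strictlySeparates (B : Set (ℝ × ℝ)) (F : Finset (ℝ × ℝ)) :
    IsOpen {c | StrictlySeparates c B F} := by
  simp only [StrictlySeparates, ofPred_forall]
  refine isOpen_biInter_finset fun x _ => ?_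
  have hcont : Continuous (sqDist x) := by unfold sqDist; fun_prop
  by_cases hx : x ∈ B
  · simpa [hx] using isOpen_lt hcont continuous_const
  · simpa [hx] using isOpen_lt continuous_const hcont

lemma StrictlySeparates.mem_diskD_iff {c : ℝ × ℝ} {B : Set (ℝ × ℝ)} {F : Finset (ℝ × ℝ)}
    (h : StrictlySeparates c B F) {x : ℝ × ℝ} (hx : x ∈ F) : x ∈ diskD c ↔ x ∈ B := by
  refine ⟨fun hc => ?_, (h x hx).1⟩
  by_contra hB
  exact lt_asymm hc ((h x hx).2 hB)

lemma chi_mem_KA_of_strictlySeparates {B : Set (ℝ × ℝ)}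
    (h : ∀ F, ∃ c, StrictlySeparates c B F) : chi B ∈ KA := by
  refine mem_closure_of_forall_finset_exists_eqOn fun F => ?_
  obtain ⟨c, hc⟩ := h F
  obtain ⟨p, hp : StrictlySeparates ((p.1 : ℝ), (p.2 : ℝ)) B F⟩ :=
    (Rat.denseRange_cast.prodMap Rat.denseRange_cast).exists_mem_open
      (isOpen_setOf_strictlySeparates B F) ⟨c, hc⟩
  refine ⟨_, ⟨p, rfl⟩, fun x hx => ?_⟩
  classical
  exact if_congr (hp.mem_diskD_iff hx) rfl rfl

theorem chi_empty_mem_KA : chi (∅ : Set (ℝ × ℝ)) ∈ KA := by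
  refine chi_mem_KA_of_strictlySeparates fun F => ?_
  obtain ⟨M, hM⟩ := (F.image Prod.fst).exists_le
  refine ⟨(M + 2, 0), fun x hx => ⟨fun h => h.elim, fun _ => ?_⟩⟩
  have hx₁ : x.1 ≤ M := hM _ (Finset.mem_image_of_mem _ hx)
  unfold sqDist
  nlinarith [sq_nonneg x.2]

/-- The signed distance from `x` to the line through `a` with direction `(cos α, sin α)`,
positive on its left. -/
noncomputable def signedLineDist (a : ℝ × ℝ) (α : ℝ) (x : ℝ × ℝ) : ℝ :=
  (x.2 - a.2) * cos α - (x.1 - a.1) * sin α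

lemma sqDist_shift (x a : ℝ × ℝ) (α ε : ℝ) :
    sqDist x (a.1 - ε * sin α, a.2 + ε * cos α) =
      sqDist x a - 2 * ε * signedLineDist a α x + ε ^ 2 := by
  simp only [sqDist, signedLineDist]
  linear_combination ε ^ 2 * sin_sq_add_cos_sq α

lemma eventually_strictlySeparates_shift {a : ℝ × ℝ} {α : ℝ} {B : Set (ℝ × ℝ)}
    {F : Finset (ℝ × ℝ)} (hin : diskD a ⊆ B) (hout : ∀ x ∈ B, sqDist x a ≤ 1)
    (hF : ∀ x ∈ F, sqDist x a = 1 → (x ∈ B ↔ 0 < signedLineDist a α x)) :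
    ∀ᶠ ε in 𝓝[>] 0, StrictlySeparates (a.1 - ε * sin α, a.2 + ε * cos α) B F := by
  refine (eventually_all_finset F).2 fun x hx => ?_
  have hcont : ContinuousAt (fun ε => sqDist x a - 2 * ε * signedLineDist a α x + ε ^ 2) 0 := by
    fun_prop
  simp only [sqDist_shift]
  rcases lt_trichotomy (sqDist x a) 1 with hlt | heq | hgt
  · have hxB : x ∈ B := hin hlt
    filter_upwards [nhdsWithin_le_nhds (hcont.eventually_lt_const (by simpa using hlt))]
      with ε hε using ⟨fun _ => hε, fun h => (h hxB).elim⟩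
  · rw [heq]
    by_cases hxB : x ∈ B
    · have hd := (hF x hx heq).1 hxB
      filter_upwards [Ioo_mem_nhdsGT (by linarith : (0 : ℝ) < 2 * signedLineDist a α x)]
        with ε hε using ⟨fun _ => by nlinarith [hε.1, hε.2], fun h => (h hxB).elim⟩
    · have hd : signedLineDist a α x ≤ 0 := not_lt.1 fun h => hxB ((hF x hx heq).2 h)
      filter_upwards [self_mem_nhdsWithin] with ε (hε : 0 < ε)
        using ⟨fun h => (hxB h).elim, fun _ => by nlinarith⟩
  · have hxB : x ∉ B := fun h => (hout x h).not_gt hgt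
    filter_upwards [nhdsWithin_le_nhds (hcont.eventually_const_lt (by simpa using hgt))]
      with ε hε using ⟨fun h => (hxB h).elim, fun _ => hε⟩

lemma chi_mem_KA_of_eventually {a : ℝ × ℝ} {B : Set (ℝ × ℝ)} {l : Filter ℝ} [l.NeBot]
    (hin : diskD a ⊆ B) (hout : ∀ x ∈ B, sqDist x a ≤ 1)
    (hbd : ∀ x, sqDist x a = 1 → ∀ᶠ α in l, (x ∈ B ↔ 0 < signedLineDist a α x)) :
    chi B ∈ KA := by
  refine chi_mem_KA_of_strictlySeparates fun F => ?_
  obtain ⟨α, hα⟩ :=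
    ((eventually_all_finset F).2 fun x _ => eventually_imp_distrib_left.2 (hbd x)).exists
  obtain ⟨ε, hε⟩ := (eventually_strictlySeparates_shift hin hout hα).exists
  exact ⟨_, hε⟩

noncomputable def circlePt (a : ℝ × ℝ) (φ : ℝ) : ℝ × ℝ := (a.1 + cos φ, a.2 + sin φ)

lemma sqDist_circlePt (a : ℝ × ℝ) (φ : ℝ) : sqDist (circlePt a φ) a = 1 := by
  simp [sqDist, circlePt]

lemma signedLineDist_circlePt (a : ℝ × ℝ) (α φ : ℝ) :
    signedLineDist a α (circlePt a φ) = sin (φ - α) := by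
  simp only [signedLineDist, circlePt, add_sub_cancel_left, sin_sub]

lemma injOn_circlePt (a : ℝ × ℝ) (θ : ℝ) : InjOn (circlePt a) (Ico θ (θ + 2 * π)) := by
  intro φ hφ ψ hψ h
  simp only [circlePt, Prod.mk.injEq, add_right_inj] at h
  refine injOn_circleMap_of_abs_sub_le' (c := 0) one_ne_zero (by linarith) hφ hψ ?_
  apply Complex.ext <;> simp [circleMap_zero_re, circleMap_zero_im, h.1, h.2]

lemma exists_mem_Ico_circlePt_eq {a x : ℝ × ℝ} (hx : sqDist x a = 1) (θ : ℝ) :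
    ∃ φ ∈ Ico θ (θ + 2 * π), circlePt a φ = x := by
  obtain ⟨ψ, hψ⟩ := (Complex.norm_eq_one_iff ⟨x.1 - a.1, x.2 - a.2⟩).1 <| by
    rw [Complex.norm_def, Complex.normSq_mk, ← sq, ← sq]
    simpa [sqDist] using congrArg Real.sqrt hx
  have hper : Function.Periodic (circlePt a) (2 * π) := fun φ => by simp [circlePt]
  obtain ⟨φ, hφ, hψφ⟩ := hper.exists_mem_Ico two_pi_pos ψ θ
  refine ⟨φ, hφ, hψφ ▸ ?_⟩
  have hre := congrArg Complex.re hψ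
  have him := congrArg Complex.im hψ
  rw [Complex.exp_ofReal_mul_I_re] at hre
  rw [Complex.exp_ofReal_mul_I_im] at him
  simp only [circlePt, hre, him, add_sub_cancel]

lemma chi_diskD_union_image_circlePt_mem_KA {a : ℝ × ℝ} {θ : ℝ} {I : Set ℝ}
    (hI : I ⊆ Ico θ (θ + 2 * π)) {l : Filter ℝ} [l.NeBot]
    (h : ∀ φ ∈ Ico θ (θ + 2 * π), ∀ᶠ α in l, (φ ∈ I ↔ 0 < sin (φ - α))) :
    chi (diskD a ∪ circlePt a '' I) ∈ KA := by
  refine chi_mem_KA_of_eventually (l := l) subset_union_left ?_ fun x hx => ?_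
  · rintro x (hx | ⟨φ, -, rfl⟩)
    · exact le_of_lt hx
    · exact (sqDist_circlePt a φ).le
  · obtain ⟨φ, hφ, rfl⟩ := exists_mem_Ico_circlePt_eq hx θ
    have hnot : circlePt a φ ∉ diskD a := (sqDist_circlePt a φ).not_lt
    simpa only [mem_union, hnot, false_or, (injOn_circlePt a θ).mem_image_iff hI hφ,
      signedLineDist_circlePt] using h φ hφ

lemma L0_eq (a : ℝ × ℝ) (θ : ℝ) : L0 a θ = diskD a ∪ circlePt a '' Ioo θ (θ + π) := by
  ext x; simp [L0, circlePt, eq_comm, and_assoc]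

lemma L1_eq (a : ℝ × ℝ) (θ : ℝ) : L1 a θ = diskD a ∪ circlePt a '' Ioc θ (θ + π) := by
  ext x; simp [L1, circlePt, eq_comm, and_assoc]

lemma L2_eq (a : ℝ × ℝ) (θ : ℝ) : L2 a θ = diskD a ∪ circlePt a '' Ico θ (θ + π) := by
  ext x; simp [L2, circlePt, eq_comm, and_assoc]

theorem chi_L0_mem_KA (a : ℝ × ℝ) (θ : ℝ) : chi (L0 a θ) ∈ KA := by
  rw [L0_eq]
  exact chi_diskD_union_image_circlePt_mem_KA (l := pure θ)
    (fun _ h => ⟨h.1.le, by linarith [h.2, pi_pos]⟩)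
    fun φ hφ => eventually_pure.2 (mem_Ioo_iff_sin_pos hφ)

theorem chi_L1_mem_KA (a : ℝ × ℝ) (θ : ℝ) : chi (L1 a θ) ∈ KA := by
  rw [L1_eq]
  exact chi_diskD_union_image_circlePt_mem_KA
    (fun _ h => ⟨h.1.le, by linarith [h.2, pi_pos]⟩) fun φ hφ => eventually_mem_Ioc_iff_sin_pos hφ

theorem chi_L2_mem_KA (a : ℝ × ℝ) (θ : ℝ) : chi (L2 a θ) ∈ KA := by
  rw [L2_eq]
  exact chi_diskD_union_image_circlePt_mem_KA
    (fun _ h => ⟨h.1, by linarith [h.2, pi_pos]⟩) fun φ hφ => eventually_mem_Ico_iff_sin_pos hφ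

/-- `Y ∪ {χ_B : B ∈ ℬ} ∪ {χ_∅} ⊆ KA`. -/
theorem subset_KA :
    YA ∪ {f | ∃ B ∈ BB, f = chi B} ∪ {chi (∅ : Set (ℝ × ℝ))} ⊆ KA := by
  rintro f ((hf | ⟨B, ⟨a, θ, rfl | rfl | rfl⟩, rfl⟩) | rfl)
  · exact subset_closure hf
  · exact chi_L0_mem_KA a θ
  · exact chi_L1_mem_KA a θ
  · exact chi_L2_mem_KA a θ
  · exact chi_empty_mem_KA
end
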